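/- arXiv:0803.4292 — 7 statements merged into one kernel-verified Lean document; each statement's English description precedes it below -/
import Mathlib

section
/- Let (U, ≤) be a partially ordered set equipped with a size function s : U → ℕ satisfying the finiteness condition (for every n, the set {A ∈ U : s(A) = n} is finite) and the monotonicity condition (for all G, H ∈ U, if G ≤ H and s(G) ≥ s(H) then G = H). If (U, ≤) contains an infinite antichain, then the set of counting functions {f_P : P a downset of (U, ≤)}, where f_P(n) = #{A ∈ P : s(A) = n}, is uncountable. -/
/-- If a poset `U` with size function `s` satisfies the finiteness and
monotonicity conditions and has an infinite antichain, then the set of counting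
functions of downsets of `U` is uncountable. -/
theorem stmt_0 {U : Type*} [PartialOrder U] (s : U → ℕ)
    (hfin : ∀ n : ℕ, {A : U | s A = n}.Finite)
    (hmono : ∀ G H : U, G ≤ H → s H ≤ s G → G = H)
    (hanti : ∃ A : Set U, A.Infinite ∧ IsAntichain (· ≤ ·) A) :
    ¬ Set.Countable
        {f : ℕ → ℕ | ∃ P : Set U, IsLowerSet P ∧
          f = fun n => {A ∈ P | s A = n}.ncard} := by
  intro hcount
  obtain ⟨A, hAinf, hAanti⟩ := hanti
  classical
  let e := hAinf.natEmbedding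
  let g : ℚ → U := fun q => (e ((Denumerable.eqv ℚ) q) : U)
  have hgA : ∀ q, g q ∈ A := fun q => (e ((Denumerable.eqv ℚ) q)).2
  have hginj : Function.Injective g := by
    intro a b hab
    have : e ((Denumerable.eqv ℚ) a) = e ((Denumerable.eqv ℚ) b) :=
      Subtype.val_injective hab
    exact (Denumerable.eqv ℚ).injective (e.injective this)
  let S : ℝ → Set U := fun r => {x | ∃ q : ℚ, (q : ℝ) < r ∧ x ≤ g q}
  have hSlow : ∀ r, IsLowerSet (S r) := by
    intro r x y hxy hx
    obtain ⟨q, hq, hle⟩ := hx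
    exact ⟨q, hq, hxy.trans hle⟩
  let F : ℝ → ℕ → ℕ := fun r n => {A ∈ S r | s A = n}.ncard
  have hmem : ∀ r, F r ∈ {f : ℕ → ℕ | ∃ P : Set U, IsLowerSet P ∧
      f = fun n => {A ∈ P | s A = n}.ncard} := fun r => ⟨S r, hSlow r, rfl⟩
  have key : ∀ r r' : ℝ, r < r' → F r ≠ F r' := by
    intro r r' hlt hFeq
    obtain ⟨q, hq1, hq2⟩ := exists_rat_btwn hlt
    have hgq_in : g q ∈ S r' := ⟨q, hq2, le_refl _⟩
    have hgq_out : g q ∉ S r := by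
      rintro ⟨q', hq', hle⟩
      have hne : g q ≠ g q' := by
        intro h
        have : q = q' := hginj h
        subst this
        exact absurd hq' (not_lt.mpr hq1.le)
      exact hAanti (hgA q) (hgA q') hne hle
    have hsub : S r ⊆ S r' := by
      rintro x ⟨p, hp, hle⟩
      exact ⟨p, hp.trans hlt, hle⟩
    have hssub : {x ∈ S r | s x = s (g q)} ⊂ {x ∈ S r' | s x = s (g q)} := by
      constructor
      · exact fun x ⟨h1, h2⟩ => ⟨hsub h1, h2⟩
      · intro hcon
        exact hgq_out (hcon ⟨hgq_in, rfl⟩).1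
    have hfin' : {x ∈ S r' | s x = s (g q)}.Finite :=
      (hfin (s (g q))).subset (fun x hx => hx.2)
    have : F r (s (g q)) < F r' (s (g q)) := Set.ncard_lt_ncard hssub hfin'
    rw [hFeq] at this
    exact lt_irrefl _ this
  have hFinj : Function.Injective F := by
    intro r r' h
    by_contra hne
    rcases lt_trichotomy r r' with h1 | h1 | h1
    · exact key r r' h1 h
    · exact hne h1
    · exact key r' r h1 h.symm
  have hrange : (Set.range F).Countable := hcount.mono (Set.range_subset_iff.mpr hmem)
  have : (Set.univ : Set ℝ).Countable := by
    have := hrange.preimage hFinj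
    rwa [Set.preimage_range] at this
  exact Cardinal.not_countable_real this
end

section
/- If P is a downset in the poset of finite set partitions (ordered by order-isomorphic induced restriction) such that the maximum number of blocks over all partitions in P equals k (a finite number), then there exist a natural number n₀ and polynomials p₁(x), p₂(x), …, p_k(x) with rational coefficients such that for every n > n₀, the number of partitions in P of order n equals p₁(n)·1ⁿ + p₂(n)·2ⁿ + ⋯ + p_k(n)·kⁿ. -/
/-!
Encode a partition of `[n]` with at most `m` blocks by the words `w : [n] → Fin m` having it
as kernel; a partition with `j` blocks has `m (m - 1) ⋯ (m - j + 1)` such encodings. As `P` is a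
downset, the words over `Fin m` whose kernel lies in `P` are closed under taking subsequences,
so by Higman's lemma they are the words avoiding finitely many subsequences. These are
recognised by an automaton whose state is the set of suffixes of the forbidden words already
occurring as subsequences. States only grow along a word, so the numbers of words of length `n`
reaching each state satisfy triangular linear recurrences with diagonal coefficients at most
`m`, hence are exponential polynomials in `n` with bases `1, …, m`. Finally, the descending
factorials `m (m - 1) ⋯ (m - j + 1)`, `0 ≤ j, m ≤ k`, form an invertible triangular matrix, so
the number of partitions of `[n]` in `P` is a rational combination of these word counts.
-/

open Polynomial Filter Finset
open scoped List

/-- Containment of set partitions: a set partition of `{1,…,n}` is modeled as an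
equivalence relation (setoid) on `Fin n`; `S ≺ T` iff there is a strictly increasing
injection mapping same-block pairs to same-block pairs and conversely. -/
def PartitionLE {m n : ℕ} (S : Setoid (Fin m)) (T : Setoid (Fin n)) : Prop :=
  ∃ f : Fin m → Fin n, StrictMono f ∧ ∀ x y : Fin m, S.r x y ↔ T.r (f x) (f y)

variable {α : Type*}

noncomputable def expPolySum (k : ℕ) (p : Fin k → ℚ[X]) (n : ℕ) : ℚ :=
  ∑ i : Fin k, (p i).eval (n : ℚ) * (((i : ℕ) : ℚ) + 1) ^ n

def EventuallyExpPoly (k : ℕ) (f : ℕ → ℚ) : Prop :=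
  ∃ p : Fin k → ℚ[X], f =ᶠ[atTop] expPolySum k p

namespace EventuallyExpPoly

variable {k : ℕ} {f g : ℕ → ℚ}

theorem congr (hf : EventuallyExpPoly k f) (h : f =ᶠ[atTop] g) : EventuallyExpPoly k g :=
  let ⟨p, hp⟩ := hf
  ⟨p, h.symm.trans hp⟩

theorem zero : EventuallyExpPoly k 0 :=
  ⟨0, .of_eq <| funext fun n => by simp [expPolySum]⟩

theorem add (hf : EventuallyExpPoly k f) (hg : EventuallyExpPoly k g) :
    EventuallyExpPoly k (f + g) := by
  obtain ⟨p, hp⟩ := hf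
  obtain ⟨q, hq⟩ := hg
  refine ⟨p + q, (hp.add hq).trans (.of_eq <| funext fun n => ?_)⟩
  simp [expPolySum, add_mul, sum_add_distrib]

theorem const_mul (c : ℚ) (hf : EventuallyExpPoly k f) :
    EventuallyExpPoly k fun n => c * f n := by
  obtain ⟨p, hp⟩ := hf
  refine ⟨fun i => C c * p i,
    (hp.mul_left (f₃ := fun _ => c)).trans (.of_eq <| funext fun n => ?_)⟩
  simp [expPolySum, mul_sum, mul_assoc]

theorem sum {ι : Type*} (s : Finset ι) {f : ι → ℕ → ℚ}
    (hf : ∀ i ∈ s, EventuallyExpPoly k (f i)) :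
    EventuallyExpPoly k fun n => ∑ i ∈ s, f i n := by
  classical
  induction s using Finset.induction_on with
  | empty => exact zero.congr (.of_eq <| funext fun n => by simp)
  | insert a s ha ih =>
    have hs := (hf a (mem_insert_self a s)).add (ih fun i hi => hf i (mem_insert_of_mem hi))
    exact hs.congr (.of_eq <| funext fun n => by simp [sum_insert ha])

theorem const_mul_pow (c : ℚ) {d : ℕ} (hd : d ≤ k) :
    EventuallyExpPoly k fun n => c * d ^ n := by
  rcases Nat.eq_zero_or_pos d with rfl | hd₀
  · refine zero.congr ?_
    filter_upwards [eventually_ne_atTop 0] with n hn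
    simp [hn]
  · refine ⟨Pi.single ⟨d - 1, by omega⟩ (C c), .of_eq <| funext fun n => ?_⟩
    rw [expPolySum, sum_eq_single ⟨d - 1, by omega⟩ (fun i _ hi => by simp [hi]) (by simp)]
    simp [Nat.cast_sub hd₀]

theorem of_succ_eq_mul {u : ℕ → ℚ} {d : ℕ} (hd : d ≤ k)
    (hu : ∀ᶠ n in atTop, u (n + 1) = d * u n) : EventuallyExpPoly k u := by
  obtain ⟨N, hN⟩ := eventually_atTop.1 hu
  rcases eq_or_ne d 0 with rfl | hd₀
  · refine zero.congr (eventually_atTop.2 ⟨N + 1, fun n hn => ?_⟩)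
    obtain ⟨m, rfl⟩ := Nat.exists_eq_add_of_le' (Nat.one_le_of_lt hn)
    simpa using (hN m (by omega)).symm
  · have hgeom : ∀ n ≥ N, u n = u N / (d : ℚ) ^ N * d ^ n := by
      intro n hn
      induction n, hn using Nat.le_induction with
      | base => field_simp
      | succ n hn ih => rw [hN n hn, ih, pow_succ]; ring
    exact (const_mul_pow _ hd).congr (eventually_atTop.2 ⟨N, fun n hn => (hgeom n hn).symm⟩)

end EventuallyExpPoly

section ShiftEquation

variable {K : Type*} [Field K]

noncomputable def shiftSub (α β : K) : K[X] →ₗ[K] K[X] :=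
  α • taylor 1 - β • LinearMap.id

theorem shiftSub_apply (α β : K) (r : K[X]) :
    shiftSub α β r = α • r.comp (X + 1) - β • r := by
  simp [shiftSub, taylor_apply]

theorem coeff_shiftSub_X_pow (α β : K) (M j : ℕ) :
    (shiftSub α β (X ^ M)).coeff j = α * M.choose j - β * if j = M then 1 else 0 := by
  simp [shiftSub_apply, coeff_X_add_one_pow, coeff_X_pow]

theorem exists_coeff_shiftSub_X_pow_ne_zero [CharZero K] {α : K} (hα : α ≠ 0) (β : K)
    (N : ℕ) :
    ∃ M, (shiftSub α β (X ^ M)).coeff N ≠ 0 ∧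
      ∀ j, N < j → (shiftSub α β (X ^ M)).coeff j = 0 := by
  simp only [coeff_shiftSub_X_pow]
  rcases eq_or_ne α β with rfl | hαβ
  -- for `α = β` the operator is `α` times the forward difference, which lowers degrees by one
  · refine ⟨N + 1, by simp [Nat.choose_succ_self_right, hα, Nat.cast_add_one_ne_zero],
      fun j hj => ?_⟩
    obtain rfl | hj := (Nat.succ_le_of_lt hj).eq_or_lt
    · simp
    · simp [Nat.choose_eq_zero_of_lt hj, hj.ne']
  · exact ⟨N, by simpa [sub_eq_zero] using hαβ, fun j hj => by
      simp [Nat.choose_eq_zero_of_lt hj, hj.ne']⟩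

theorem shiftSub_surjective [CharZero K] {α : K} (hα : α ≠ 0) (β : K) :
    Function.Surjective (shiftSub α β) := by
  suffices h : ∀ (N : ℕ) (q : K[X]), q.degree < N → ∃ r, shiftSub α β r = q from
    fun q => h _ q ((degree_lt_iff_coeff_zero q (q.natDegree + 1)).2 fun m hm =>
      coeff_eq_zero_of_natDegree_lt hm)
  intro N
  induction N with
  | zero =>
    intro q hq
    exact ⟨0, by ext m; simp [(degree_lt_iff_coeff_zero q 0).1 hq m m.zero_le]⟩
  | succ N ih =>
    intro q hq
    obtain ⟨M, hMN, hM⟩ := exists_coeff_shiftSub_X_pow_ne_zero hα β N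
    set c := q.coeff N / (shiftSub α β (X ^ M)).coeff N
    have hdeg : (q - c • shiftSub α β (X ^ M)).degree < N := by
      refine (degree_lt_iff_coeff_zero _ _).2 fun j hj => ?_
      rcases hj.eq_or_lt with rfl | hj
      · simp [c, hMN]
      · simp [hM j hj, (degree_lt_iff_coeff_zero q (N + 1)).1 hq j hj]
    obtain ⟨r, hr⟩ := ih _ hdeg
    exact ⟨r + c • X ^ M, by rw [map_add, map_smul, hr, sub_add_cancel]⟩

theorem exists_eval_add_one_sub_eq [CharZero K] {α : K} (hα : α ≠ 0) (β : K) (q : K[X]) :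
    ∃ r : K[X], ∀ x, α * r.eval (x + 1) - β * r.eval x = q.eval x := by
  obtain ⟨r, hr⟩ := shiftSub_surjective hα β q
  exact ⟨r, fun x => by simpa [shiftSub_apply] using congrArg (eval x) hr⟩

end ShiftEquation

theorem EventuallyExpPoly.of_succ_eq_mul_add {k : ℕ} {f g : ℕ → ℚ} {d : ℕ} (hd : d ≤ k)
    (hg : EventuallyExpPoly k g) (hf : ∀ n, f (n + 1) = d * f n + g n) :
    EventuallyExpPoly k f := by
  obtain ⟨p, hp⟩ := hg
  choose r hr using fun i : Fin k => exists_eval_add_one_sub_eq (α := ((i : ℕ) : ℚ) + 1)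
    (by positivity) d (p i)
  have hrec : ∀ n, expPolySum k r (n + 1) = d * expPolySum k r n + expPolySum k p n := by
    intro n
    simp only [expPolySum, mul_sum, ← sum_add_distrib, ← hr, Nat.cast_succ, pow_succ]
    exact sum_congr rfl fun i _ => by ring
  -- `expPolySum k r` solves the recurrence for large `n`; two solutions differ by `c * d ^ n`
  have hdiff : EventuallyExpPoly k (f - expPolySum k r) := of_succ_eq_mul hd <| by
    filter_upwards [hp] with n hn
    simp only [Pi.sub_apply, hf, hrec, hn]
    ring
  simpa using hdiff.add ⟨r, .rfl⟩

section Subwords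

variable [DecidableEq α] (T : Finset (List α))

def subwordsIn (w : List α) : Finset (List α) := T.filter (· <+ w)

def extendSubwords (a : α) (s : Finset (List α)) : Finset (List α) :=
  s ∪ (s.image (a :: ·)).filter (· ∈ T)

variable {T}

theorem subset_extendSubwords (a : α) (s : Finset (List α)) : s ⊆ extendSubwords T a s :=
  subset_union_left

theorem subwordsIn_cons (hT : ∀ a r, a :: r ∈ T → r ∈ T) (a : α) (w : List α) :
    subwordsIn T (a :: w) = extendSubwords T a (subwordsIn T w) := by
  ext v
  simp only [subwordsIn, extendSubwords, mem_union, mem_filter, mem_image, List.sublist_cons_iff]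
  constructor
  · rintro ⟨hv, h | ⟨r, rfl, hr⟩⟩
    · exact .inl ⟨hv, h⟩
    · exact .inr ⟨⟨r, ⟨hT a r hv, hr⟩, rfl⟩, hv⟩
  · rintro (⟨hv, h⟩ | ⟨⟨r, ⟨-, hr⟩, rfl⟩, hv⟩)
    · exact ⟨hv, .inl h⟩
    · exact ⟨hv, .inr ⟨r, rfl, hr⟩⟩

variable [Fintype α]

variable (T) in
def subwordsCount (s : Finset (List α)) (n : ℕ) : ℕ :=
  #{w : Fin n → α | subwordsIn T (List.ofFn w) = s}

theorem subwordsCount_succ (hT : ∀ a r, a :: r ∈ T → r ∈ T) (s : Finset (List α))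
    (n : ℕ) :
    subwordsCount T s (n + 1) =
      ∑ s' ∈ T.powerset, #{a | extendSubwords T a s' = s} * subwordsCount T s' n := by
  calc subwordsCount T s (n + 1)
      = ∑ w : Fin (n + 1) → α, if subwordsIn T (List.ofFn w) = s then 1 else 0 :=
        card_filter _ _
    _ = ∑ p : α × (Fin n → α),
          if extendSubwords T p.1 (subwordsIn T (List.ofFn p.2)) = s then 1 else 0 :=
        (Fintype.sum_equiv (Fin.consEquiv fun _ => α) _ _ fun p => by
          simp [Fin.consEquiv, List.ofFn_succ, subwordsIn_cons hT]).symm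
    _ = ∑ w : Fin n → α, #{a | extendSubwords T a (subwordsIn T (List.ofFn w)) = s} := by
        simp only [Fintype.sum_prod_type_right, card_filter]
    _ = ∑ s' ∈ T.powerset, #{a | extendSubwords T a s' = s} * subwordsCount T s' n := by
        rw [← sum_fiberwise_of_maps_to' (g := fun w : Fin n → α => subwordsIn T (List.ofFn w))
          (t := T.powerset) (fun w _ => mem_powerset.2 (filter_subset _ _))
          (fun s' => #{a | extendSubwords T a s' = s})]
        refine sum_congr rfl fun s' _ => ?_
        rw [sum_const, smul_eq_mul, mul_comm]
        rfl

theorem eventuallyExpPoly_subwordsCount (hT : ∀ a r, a :: r ∈ T → r ∈ T) {k : ℕ}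
    (hk : Fintype.card α ≤ k) (s : Finset (List α)) (hs : s ⊆ T) :
    EventuallyExpPoly k fun n => (subwordsCount T s n : ℚ) := by
  induction s using Finset.strongInduction with
  | H s ih =>
    set e : Finset (List α) → ℚ := fun s' => #{a | extendSubwords T a s' = s}
    have hrec : ∀ n, (subwordsCount T s (n + 1) : ℚ) = e s * subwordsCount T s n +
        ∑ s' ∈ T.powerset.erase s, e s' * subwordsCount T s' n := by
      intro n
      rw [subwordsCount_succ hT, ← add_sum_erase _ _ (mem_powerset.2 hs)]
      push_cast
      rfl
    refine EventuallyExpPoly.of_succ_eq_mul_add ((card_filter_le _ _).trans hk)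
      (EventuallyExpPoly.sum _ fun s' hs' => ?_) hrec
    by_cases hss' : s' ⊂ s
    · exact (ih s' hss' (hss'.subset.trans hs)).const_mul _
    · refine EventuallyExpPoly.zero.congr (.of_eq <| funext fun n => ?_)
      suffices e s' = 0 by simp [this]
      simp only [e, Nat.cast_eq_zero, card_eq_zero, filter_eq_empty_iff]
      rintro a - rfl
      exact hss' ((subset_extendSubwords a s').ssubset_of_ne (mem_erase.1 hs').1)

end Subwords

theorem eventuallyExpPoly_card_not_sublist [DecidableEq α] [Fintype α] {k : ℕ}
    (hk : Fintype.card α ≤ k) (F : Finset (List α)) :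
    EventuallyExpPoly k fun n =>
      (#{w : Fin n → α | ∀ u ∈ F, ¬ u <+ List.ofFn w} : ℚ) := by
  set T := F.biUnion fun u => u.tails.toFinset
  have hT : ∀ a r, a :: r ∈ T → r ∈ T := by
    simp only [T, mem_biUnion, List.mem_toFinset, List.mem_tails]
    exact fun a r ⟨u, hu, h⟩ => ⟨u, hu, (List.suffix_cons a r).trans h⟩
  have hFT : F ⊆ T := fun u hu => mem_biUnion.2 ⟨u, hu, by simp⟩
  have hF : ∀ w, (∀ u ∈ F, ¬ u <+ w) ↔ Disjoint F (subwordsIn T w) := fun w => by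
    simp only [disjoint_left, subwordsIn, mem_filter, not_and]
    exact forall₂_congr fun u hu => (imp_iff_right (hFT hu)).symm
  have hcount : ∀ n, #{w : Fin n → α | ∀ u ∈ F, ¬ u <+ List.ofFn w} =
      ∑ s ∈ T.powerset with Disjoint F s, subwordsCount T s n := by
    intro n
    rw [card_eq_sum_card_fiberwise (f := fun w => subwordsIn T (List.ofFn w)) fun w hw =>
      mem_filter.2 ⟨mem_powerset.2 (filter_subset _ _), (hF _).1 (mem_filter.1 hw).2⟩]
    refine sum_congr rfl fun s hs => ?_
    rw [filter_filter, subwordsCount]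
    congr 1
    refine filter_congr fun w _ => and_iff_right_of_imp fun h => ?_
    exact (hF _).2 (h ▸ (mem_filter.1 hs).2)
  simp only [hcount, Nat.cast_sum]
  exact EventuallyExpPoly.sum _ fun s hs =>
    eventuallyExpPoly_subwordsCount hT hk s (mem_powerset.1 (mem_filter.1 hs).1)

theorem partiallyWellOrderedOn_sublist [Finite α] :
    (Set.univ : Set (List α)).PartiallyWellOrderedOn List.Sublist := by
  have h := (Set.finite_univ (α := α)).partiallyWellOrderedOn (r := Eq)
    |>.partiallyWellOrderedOn_sublistForall₂ Eq
  have hEq : List.SublistForall₂ (α := α) Eq = List.Sublist := by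
    ext l₁ l₂
    simp [List.sublistForall₂_iff, List.forall₂_eq_eq_eq]
  simpa [hEq] using h

theorem exists_finset_forall_not_sublist_iff [Finite α] (D : Set (List α))
    (hD : ∀ u w, u <+ w → w ∈ D → u ∈ D) :
    ∃ F : Finset (List α), ∀ w, w ∈ D ↔ ∀ u ∈ F, ¬ u <+ w := by
  set M := {u | u ∉ D ∧ ∀ v, v <+ u → v ∉ D → v = u}
  have hM : M.Finite := IsAntichain.finite_of_partiallyWellOrderedOn
    (fun u hu v hv huv h => huv (hv.2 u h hu.1))
    (partiallyWellOrderedOn_sublist.mono (Set.subset_univ M))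
  refine ⟨hM.toFinset, fun w => ⟨fun hw u hu huw => (hM.mem_toFinset.1 hu).1 (hD u w huw hw),
    fun h => by_contra fun hw => ?_⟩⟩
  obtain ⟨u, ⟨huw, hu⟩, hmin⟩ :=
    (measure List.length).wf.has_min {u | u <+ w ∧ u ∉ D} ⟨w, .refl w, hw⟩
  refine h u (hM.mem_toFinset.2 ⟨hu, fun v hvu hv => ?_⟩) huw
  exact hvu.eq_of_length_le (not_lt.1 (hmin v ⟨hvu.trans huw, hv⟩))

theorem eventuallyExpPoly_card_ofFn_mem [Finite α] {k : ℕ} (hk : Nat.card α ≤ k)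
    (D : Set (List α)) (hD : ∀ u w, u <+ w → w ∈ D → u ∈ D) :
    EventuallyExpPoly k fun n => (Nat.card {w : Fin n → α // List.ofFn w ∈ D} : ℚ) := by
  classical
  have := Fintype.ofFinite α
  obtain ⟨F, hF⟩ := exists_finset_forall_not_sublist_iff D hD
  refine (eventuallyExpPoly_card_not_sublist (by rwa [← Nat.card_eq_fintype_card]) F).congr
    (.of_eq <| funext fun n => ?_)
  rw [Nat.card_congr (Equiv.subtypeEquivRight fun w => hF _), Nat.card_eq_fintype_card,
    Fintype.card_subtype]

def IsPartitionDownset (P : ∀ n : ℕ, Set (Setoid (Fin n))) : Prop :=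
  ∀ (m n : ℕ) (S : Setoid (Fin m)) (T : Setoid (Fin n)),
    PartitionLE S T → T ∈ P n → S ∈ P m

namespace IsPartitionDownset

variable {P : ∀ n : ℕ, Set (Setoid (Fin n))} (hP : IsPartitionDownset P)
include hP

theorem ker_mem {a b : ℕ} {f : Fin a → α} {g : Fin b → α} {φ : Fin a → Fin b}
    (hφ : StrictMono φ) (hfg : ∀ i, f i = g (φ i)) (hg : Setoid.ker g ∈ P b) :
    Setoid.ker f ∈ P a :=
  hP a b _ _ ⟨φ, hφ, fun x y => by
    show f x = f y ↔ g (φ x) = g (φ y)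
    rw [hfg, hfg]⟩ hg

theorem ker_get_mem_of_sublist {u w : List α} (huw : u <+ w)
    (hw : Setoid.ker w.get ∈ P w.length) : Setoid.ker u.get ∈ P u.length :=
  let ⟨f, hf⟩ := List.sublist_iff_exists_fin_orderEmbedding_get_eq.1 huw
  hP.ker_mem f.strictMono hf hw

theorem ker_get_ofFn_mem_iff {n : ℕ} (w : Fin n → α) :
    Setoid.ker (List.ofFn w).get ∈ P (List.ofFn w).length ↔ Setoid.ker w ∈ P n :=
  ⟨hP.ker_mem (Fin.castOrderIso List.length_ofFn.symm).strictMono fun i => by simp,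
    hP.ker_mem (Fin.castOrderIso List.length_ofFn).strictMono (List.get_ofFn w)⟩

theorem eventuallyExpPoly_card_ker_mem [Finite α] {k : ℕ} (hk : Nat.card α ≤ k) :
    EventuallyExpPoly k fun n => (Nat.card {w : Fin n → α // Setoid.ker w ∈ P n} : ℚ) := by
  refine (eventuallyExpPoly_card_ofFn_mem hk {l | Setoid.ker l.get ∈ P l.length}
    fun u w => hP.ker_get_mem_of_sublist).congr (.of_eq <| funext fun n => ?_)
  exact congrArg _ (Nat.card_congr (Equiv.subtypeEquivRight hP.ker_get_ofFn_mem_iff))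

end IsPartitionDownset

section KernelCount

variable {X : Type*}

instance Setoid.finite [Finite X] : Finite (Setoid X) :=
  Finite.of_injective (fun S : Setoid X => S.r) fun _ _ h =>
    Setoid.ext fun a b => iff_of_eq (congrFun₂ h a b)

def kerEquivEmbedding (S : Setoid X) :
    {f : X → α // Setoid.ker f = S} ≃ (Quotient S ↪ α) where
  toFun f := ⟨Quotient.lift f.1 fun a b h => by rwa [← f.2] at h,
    fun a b => Quotient.inductionOn₂ a b fun a b h => Quotient.sound (by rw [← f.2]; exact h)⟩
  invFun g := ⟨g ∘ Quotient.mk S, Setoid.ext fun a b => g.injective.eq_iff.trans Quotient.eq⟩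
  left_inv f := rfl
  right_inv g := by ext q; induction q using Quotient.inductionOn; rfl

theorem Nat.card_ker_eq_descFactorial [Finite X] [Finite α] (S : Setoid X) :
    Nat.card {f : X → α // Setoid.ker f = S} =
      (Nat.card α).descFactorial (Nat.card (Quotient S)) := by
  have := Fintype.ofFinite α
  have := Fintype.ofFinite (Quotient S)
  rw [Nat.card_congr (kerEquivEmbedding S), Nat.card_eq_fintype_card, Fintype.card_embedding_eq,
    Nat.card_eq_fintype_card, Nat.card_eq_fintype_card]

theorem Nat.card_ker_mem_eq_sum_descFactorial [Finite X] [Finite α] (P : Set (Setoid X))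
    [Fintype P] :
    Nat.card {f : X → α // Setoid.ker f ∈ P} =
      ∑ S : P, (Nat.card α).descFactorial (Nat.card (Quotient S.1)) := by
  let e : {f : X → α // Setoid.ker f ∈ P} ≃ Σ S : P, {f : X → α // Setoid.ker f = S} :=
    { toFun f := ⟨⟨Setoid.ker f.1, f.2⟩, f.1, rfl⟩
      invFun f := ⟨f.2.1, by rw [f.2.2]; exact f.1.2⟩
      left_inv f := rfl
      right_inv := by
        rintro ⟨⟨S, hS⟩, f, hf⟩
        obtain rfl : Setoid.ker f = S := hf
        rfl }
  rw [Nat.card_congr e, Nat.card_sigma]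
  exact sum_congr rfl fun S _ => Nat.card_ker_eq_descFactorial S.1

end KernelCount

theorem exists_sum_mul_descFactorial_eq_one (k : ℕ) :
    ∃ c : Fin (k + 1) → ℚ,
      ∀ j ≤ k, ∑ m : Fin (k + 1), c m * (m : ℕ).descFactorial j = 1 := by
  let M : Matrix (Fin (k + 1)) (Fin (k + 1)) ℚ := .of fun m j => (m : ℕ).descFactorial j
  have hM : IsUnit M := by
    rw [Matrix.isUnit_iff_isUnit_det, Matrix.det_of_isLowerTriangular M fun i j hij => by
      simp [M, Nat.descFactorial_eq_zero_iff_lt.2 (show (i : ℕ) < j from hij)]]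
    exact IsUnit.mk0 _ <| prod_ne_zero_iff.2 fun i _ => by
      simp [M, Nat.descFactorial_self, Nat.factorial_ne_zero]
  obtain ⟨c, hc⟩ := Matrix.vecMul_surjective_iff_isUnit.2 hM fun _ => 1
  exact ⟨c, fun j hj => by
    simpa [Matrix.vecMul, dotProduct, M] using congrFun hc ⟨j, by omega⟩⟩

theorem ncard_eq_sum_mul_card_ker_mem {X : Type*} [Finite X] {k : ℕ} (P : Set (Setoid X))
    (hP : ∀ S ∈ P, Nat.card (Quotient S) ≤ k) {c : Fin (k + 1) → ℚ}
    (hc : ∀ j ≤ k, ∑ m : Fin (k + 1), c m * (m : ℕ).descFactorial j = 1) :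
    (P.ncard : ℚ) =
      ∑ m : Fin (k + 1), c m * Nat.card {f : X → Fin m // Setoid.ker f ∈ P} := by
  have := Fintype.ofFinite P
  simp only [Nat.card_ker_mem_eq_sum_descFactorial, Nat.card_fin, Nat.cast_sum, mul_sum]
  rw [sum_comm, ← Nat.card_coe_set_eq, Nat.card_eq_fintype_card, Fintype.card_eq_sum_ones,
    Nat.cast_sum]
  exact sum_congr rfl fun S _ => by simpa using (hc _ (hP S.1 S.2)).symm

theorem stmt_1_general (P : ∀ n : ℕ, Set (Setoid (Fin n)))
    (hdown : ∀ (m n : ℕ) (S : Setoid (Fin m)) (T : Setoid (Fin n)),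
      PartitionLE S T → T ∈ P n → S ∈ P m)
    (k : ℕ)
    (hbound : ∀ (n : ℕ) (S : Setoid (Fin n)), S ∈ P n → Nat.card (Quotient S) ≤ k) :
    ∃ (n₀ : ℕ) (p : Fin k → Polynomial ℚ),
      ∀ n : ℕ, n > n₀ →
        ((P n).ncard : ℚ) = ∑ i : Fin k, (p i).eval (n : ℚ) * (((i : ℕ) : ℚ) + 1) ^ n := by
  obtain ⟨c, hc⟩ := exists_sum_mul_descFactorial_eq_one k
  have hwords : EventuallyExpPoly k fun n =>
      ∑ m : Fin (k + 1), c m * (Nat.card {w : Fin n → Fin m // Setoid.ker w ∈ P n} : ℚ) :=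
    EventuallyExpPoly.sum _ fun m _ =>
      (IsPartitionDownset.eventuallyExpPoly_card_ker_mem hdown (by simpa using m.is_le)).const_mul
        (c m)
  obtain ⟨p, hp⟩ := hwords.congr <| .of_eq <| funext fun n =>
    (ncard_eq_sum_mul_card_ker_mem (P n) (hbound n) hc).symm
  obtain ⟨n₀, hn₀⟩ := eventually_atTop.1 hp
  exact ⟨n₀, p, fun n hn => hn₀ n hn.le⟩

/-- Klazar's theorem.  If `P` is a downset of set partitions in which
the maximum number of blocks is exactly `k`, then for all large `n` the number of
partitions of order `n` in `P` equals `p₁(n)·1ⁿ + ⋯ + p_k(n)·kⁿ` for rational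
polynomials `p₁, …, p_k`. -/
theorem stmt_1 (P : ∀ n : ℕ, Set (Setoid (Fin n)))
    (hdown : ∀ (m n : ℕ) (S : Setoid (Fin m)) (T : Setoid (Fin n)),
      PartitionLE S T → T ∈ P n → S ∈ P m)
    (k : ℕ)
    (hbound : ∀ (n : ℕ) (S : Setoid (Fin n)), S ∈ P n → Nat.card (Quotient S) ≤ k)
    (hattain : ∃ (n : ℕ) (S : Setoid (Fin n)), S ∈ P n ∧ Nat.card (Quotient S) = k) :
    ∃ (n₀ : ℕ) (p : Fin k → Polynomial ℚ),
      ∀ n : ℕ, n > n₀ →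
        ((P n).ncard : ℚ) = ∑ i : Fin k, (p i).eval (n : ℚ) * (((i : ℕ) : ℚ) + 1) ^ n :=
  stmt_1_general P hdown k hbound
end

section
/- Let v be an infinite word over a finite alphabet A and let P be the set of all its finite subwords (contiguous factors), with f_P(n) the number of distinct subwords of v of length n. Then either f_P(n) > n for every n ∈ ℕ, or f_P(n) is constant for all sufficiently large n; moreover, in the latter case the word v is eventually periodic. -/
namespace MHaux

variable {A : Type*} [Fintype A] (v : ℕ → A)

def Fac (n : ℕ) : Set (Fin n → A) := {w | ∃ r : ℕ, ∀ i : Fin n, w i = v (r + i)}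

lemma fac_finite (n : ℕ) : (Fac v n).Finite := Set.toFinite _

lemma window_mem (n r : ℕ) : (fun i : Fin n => v (r + i)) ∈ Fac v n := ⟨r, fun _ => rfl⟩

lemma restrict_image (k : ℕ) :
    (fun w : Fin (k+1) → A => w ∘ Fin.castSucc) '' Fac v (k+1) = Fac v k := by
  apply subset_antisymm
  · rintro _ ⟨w, ⟨r, hr⟩, rfl⟩
    exact ⟨r, fun i => by simpa using hr i.castSucc⟩
  · rintro w ⟨r, hr⟩
    refine ⟨fun i : Fin (k+1) => v (r + i), window_mem v _ r, ?_⟩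
    funext i
    simp [Function.comp, hr i]

lemma fac_mono (n : ℕ) : (Fac v n).ncard ≤ (Fac v (n+1)).ncard := by
  calc (Fac v n).ncard
      = ((fun w : Fin (n+1) → A => w ∘ Fin.castSucc) '' Fac v (n+1)).ncard := by
        rw [restrict_image]
    _ ≤ (Fac v (n+1)).ncard := Set.ncard_image_le (fac_finite v (n+1))

lemma fac_zero : (Fac v 0).ncard = 1 := by
  have : Fac v 0 = Set.univ := by
    ext w
    simp only [Set.mem_univ, iff_true]
    exact ⟨0, fun i => i.elim0⟩
  rw [this, Set.ncard_univ]
  simp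

lemma determinism {k : ℕ} (hk : (Fac v (k+1)).ncard ≤ (Fac v k).ncard)
    (r r' : ℕ) (h : ∀ j < k, v (r + j) = v (r' + j)) : v (r + k) = v (r' + k) := by
  have hinj : Set.InjOn (fun w : Fin (k+1) → A => w ∘ Fin.castSucc) (Fac v (k+1)) := by
    apply Set.injOn_of_ncard_image_eq ?_ (fac_finite v (k+1))
    rw [restrict_image]
    exact le_antisymm (fac_mono v k) hk
  have heq : (fun w : Fin (k+1) → A => w ∘ Fin.castSucc) (fun i : Fin (k+1) => v (r + i))
      = (fun w : Fin (k+1) → A => w ∘ Fin.castSucc) (fun i : Fin (k+1) => v (r' + i)) := by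
    funext i
    simpa using h i i.isLt
  have hw := hinj (window_mem v (k+1) r) (window_mem v (k+1) r') heq
  have := congrFun hw (Fin.last k)
  simpa using this

lemma periodic_core {k : ℕ}
    (D : ∀ r r', (∀ j < k, v (r + j) = v (r' + j)) → v (r + k) = v (r' + k))
    {a b : ℕ} (hab : a < b) (h0 : ∀ j < k, v (a + j) = v (b + j)) :
    ∀ n ≥ a + k, v (n + (b - a)) = v n := by
  have S : ∀ m, ∀ j < k, v (a + m + j) = v (b + m + j) := by
    intro m
    induction m with
    | zero => simpa using h0
    | succ m ih =>
      intro j hj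
      have h1 : a + (m+1) + j = a + m + (j+1) := by ring
      have h2 : b + (m+1) + j = b + m + (j+1) := by ring
      rw [h1, h2]
      rcases lt_or_eq_of_le (Nat.succ_le_of_lt hj) with h | h
      · exact ih (j+1) h
      · rw [show j + 1 = k from h]; exact D _ _ ih
  have T : ∀ m, v (a + m + k) = v (b + m + k) := fun m => D _ _ (S m)
  intro n hn
  obtain ⟨m, rfl⟩ : ∃ m, n = a + m + k := ⟨n - a - k, by omega⟩
  have hb : a + m + k + (b - a) = b + m + k := by omega
  rw [hb]
  exact (T m).symm

lemma f_bound {p q : ℕ} (hper : ∀ n ≥ q, v (n + p) = v n) (hp : 1 ≤ p) (n : ℕ) :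
    (Fac v n).ncard ≤ q + p := by
  have key : ∀ r, ∃ r' < q + p, ∀ i : Fin n, v (r + i) = v (r' + i) := by
    intro r
    induction r using Nat.strong_induction_on with
    | _ r ih =>
      by_cases h : r < q + p
      · exact ⟨r, h, fun i => rfl⟩
      · obtain ⟨r', hr', hw⟩ := ih (r - p) (by omega)
        refine ⟨r', hr', fun i => ?_⟩
        rw [← hw i]
        have h2 : r + i = (r - p + i) + p := by omega
        rw [h2, hper _ (by omega)]
  have hsub : Fac v n ⊆ (fun r : ℕ => fun i : Fin n => v (r + i)) '' ↑(Finset.range (q + p)) := by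
    rintro w ⟨r, hr⟩
    obtain ⟨r', hr', hw⟩ := key r
    refine ⟨r', by simpa using hr', ?_⟩
    funext i
    show v (r' + i) = w i
    rw [hr i]
    exact (hw i).symm
  calc (Fac v n).ncard ≤ _ := Set.ncard_le_ncard hsub (Set.toFinite _)
    _ ≤ (↑(Finset.range (q+p)) : Set ℕ).ncard := Set.ncard_image_le (Set.toFinite _)
    _ = q + p := by rw [Set.ncard_coe_finset, Finset.card_range]

end MHaux

/-- Morse–Hedlund.  Let `v` be an infinite word over a finite alphabet `A`
and let `f n` be the number of distinct factors (contiguous subwords) of `v` of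
length `n`.  Then either `f n > n` for every `n ≥ 1`, or `f` is eventually constant
and `v` is eventually periodic. -/
theorem stmt_3 {A : Type*} [Fintype A] (v : ℕ → A) (f : ℕ → ℕ)
    (hf : ∀ n : ℕ, f n = Set.ncard {w : Fin n → A | ∃ r : ℕ, ∀ i : Fin n, w i = v (r + i)}) :
    (∀ n : ℕ, 1 ≤ n → n < f n) ∨
      ((∃ (C N : ℕ), ∀ n ≥ N, f n = C) ∧
        ∃ p : ℕ, 1 ≤ p ∧ ∃ q : ℕ, ∀ n ≥ q, v (n + p) = v n) := by
  have hf' : ∀ n, f n = (MHaux.Fac v n).ncard := hf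
  by_cases H : ∀ n : ℕ, 1 ≤ n → n < f n
  · exact Or.inl H
  right
  -- there is a plateau
  have hexk : ∃ k, (MHaux.Fac v (k+1)).ncard ≤ (MHaux.Fac v k).ncard := by
    by_contra hc
    push_neg at hc
    have key : ∀ n, n < (MHaux.Fac v n).ncard := by
      intro n
      induction n with
      | zero => rw [MHaux.fac_zero]; omega
      | succ n ih => have := hc n; omega
    apply H
    intro n _
    rw [hf']
    exact key n
  obtain ⟨k, hk⟩ := hexk
  have D := MHaux.determinism v hk
  -- pigeonhole on windows of length k
  obtain ⟨x, y, hxy, hW⟩ := Finite.exists_ne_map_eq_of_infinite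
    (fun r : ℕ => fun i : Fin k => v (r + i))
  have hW' : ∀ x y : ℕ, (fun i : Fin k => v (x + i)) = (fun i : Fin k => v (y + i)) →
      ∀ j < k, v (x + j) = v (y + j) := by
    intro x y hxy j hj
    have := congrFun hxy ⟨j, hj⟩
    simpa using this
  obtain ⟨a, b, hab, h0⟩ : ∃ a b : ℕ, a < b ∧ ∀ j < k, v (a + j) = v (b + j) := by
    rcases lt_or_gt_of_ne hxy with h | h
    · exact ⟨x, y, h, hW' x y hW⟩
    · exact ⟨y, x, h, hW' y x hW.symm⟩
  have hper := MHaux.periodic_core v D hab h0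
  have hp : 1 ≤ b - a := by omega
  refine ⟨?_, b - a, hp, a + k, hper⟩
  -- f is monotone and bounded, hence eventually constant
  have hmono : Monotone f := by
    apply monotone_nat_of_le_succ
    intro n
    rw [hf', hf']
    exact MHaux.fac_mono v n
  have hbdd : ∀ n, f n ≤ (a + k) + (b - a) := by
    intro n
    rw [hf']
    exact MHaux.f_bound v hper hp n
  have hBdd : BddAbove (Set.range f) := ⟨(a + k) + (b - a), by rintro _ ⟨n, rfl⟩; exact hbdd n⟩
  have hmem : sSup (Set.range f) ∈ Set.range f :=
    Nat.sSup_mem (Set.range_nonempty f) hBdd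
  obtain ⟨N, hN⟩ := hmem
  refine ⟨sSup (Set.range f), N, fun n hn => ?_⟩
  exact le_antisymm (le_csSup hBdd ⟨n, rfl⟩) (hN ▸ hmono hn)
end

section
/- If P is a downset of permutations that is not equal to the set of all permutations, then there exists a constant c > 1 such that f_P(n) < cⁿ for every n ∈ ℕ. -/
/-!
Marcus–Tardos, with Klazar's reduction. Reading a permutation as its permutation matrix, `ρ`
avoids `π` exactly when the matrix of `ρ` avoids `π` as a 0-1 pattern, so it suffices to count
`n × n` 0-1 matrices avoiding a fixed `k × k` permutation pattern `σ`, `k ≥ 2`.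

Füredi–Hajnal: such a matrix `A` has `O(n)` ones. Cut it into `K × K` blocks, `K = k²`. A block
with at least `k` occupied columns is *wide*; a block column holds at most `(k-1) · C(K, k)` wide
blocks, since otherwise `k` of them share a `k`-set of occupied columns and together contain `σ`.
Symmetrically for *tall* blocks. Every other block has at most `(k-1)²` ones, and the nonempty
blocks form the contracted matrix, which still avoids `σ`; induction along `n = K^t` gives
`|A| ≤ c n`.

Klazar: contracting `2 × 2` blocks sends avoiders of size `2N` to avoiders of size `N`, and the
fibre over `B` consists of subsets of the `4|B| ≤ 4cN` cells lying over `B`. Hence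
`|Av(2N)| ≤ 16^{cN} |Av(N)|`, and `|Av(n)| ≤ C^n` follows along `n = 2^t`.
-/

/-- Pattern containment of permutations: `π ≺ ρ` iff some strictly increasing
injection transports the relative order of values of `π` to that of `ρ`. -/
def PermLE {m n : ℕ} (π : Equiv.Perm (Fin m)) (ρ : Equiv.Perm (Fin n)) : Prop :=
  ∃ f : Fin m → Fin n, StrictMono f ∧ ∀ r s : Fin m, π r < π s ↔ ρ (f r) < ρ (f s)

open Finset

/-- A 0-1 matrix is encoded by the finset of positions `(row, column)` of its ones. -/
def ContainsPattern {k : ℕ} (σ : Equiv.Perm (Fin k)) (A : Finset (ℕ × ℕ)) : Prop :=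
  ∃ r c : Fin k → ℕ, StrictMono r ∧ StrictMono c ∧ ∀ i, (r i, c (σ i)) ∈ A

section Pattern

variable {k : ℕ} {σ : Equiv.Perm (Fin k)} {A : Finset (ℕ × ℕ)}

theorem ContainsPattern.of_image_prodMap {f g : ℕ → ℕ} (hf : Monotone f) (hg : Monotone g)
    (h : ContainsPattern σ (A.image (Prod.map f g))) : ContainsPattern σ A := by
  obtain ⟨r, c, hr, hc, hmem⟩ := h
  have hpre : ∀ i, ∃ p ∈ A, f p.1 = r i ∧ g p.2 = c (σ i) := fun i => by
    simpa [Prod.ext_iff] using hmem i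
  choose p hpA hp1 hp2 using hpre
  refine ⟨fun i => (p i).1, fun j => (p (σ.symm j)).2, fun i j hij => hf.reflect_lt ?_,
    fun i j hij => hg.reflect_lt ?_, fun i => by simpa using hpA i⟩
  · simpa only [hp1] using hr hij
  · simpa only [hp2, Equiv.apply_symm_apply] using hc hij

theorem ContainsPattern.image_swap (h : ContainsPattern σ A) :
    ContainsPattern σ.symm (A.image Prod.swap) := by
  obtain ⟨r, c, hr, hc, hmem⟩ := h
  exact ⟨c, r, hc, hr, fun i => mem_image_of_mem _ (by simpa using hmem (σ.symm i))⟩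

theorem containsPattern_image_swap_iff :
    ContainsPattern σ.symm (A.image Prod.swap) ↔ ContainsPattern σ A := by
  refine ⟨fun h => ?_, ContainsPattern.image_swap⟩
  simpa [image_image] using h.image_swap

end Pattern

section Contract

def contract (K : ℕ) (A : Finset (ℕ × ℕ)) : Finset (ℕ × ℕ) :=
  A.image (Prod.map (· / K) (· / K))

def block (K : ℕ) (A : Finset (ℕ × ℕ)) (b : ℕ × ℕ) : Finset (ℕ × ℕ) :=
  A.filter (fun p => Prod.map (· / K) (· / K) p = b)

def blockRows (K : ℕ) (A : Finset (ℕ × ℕ)) (b : ℕ × ℕ) : Finset ℕ := (block K A b).image Prod.fst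

def blockCols (K : ℕ) (A : Finset (ℕ × ℕ)) (b : ℕ × ℕ) : Finset ℕ := (block K A b).image Prod.snd

variable {K : ℕ} {A : Finset (ℕ × ℕ)}

theorem ContainsPattern.of_contract {k : ℕ} {σ : Equiv.Perm (Fin k)}
    (h : ContainsPattern σ (contract K A)) : ContainsPattern σ A :=
  h.of_image_prodMap (fun _ _ hab => Nat.div_le_div_right hab)
    (fun _ _ hab => Nat.div_le_div_right hab)

theorem contract_subset_range {m : ℕ} (hA : A ⊆ range (K * m) ×ˢ range (K * m)) :
    contract K A ⊆ range m ×ˢ range m := by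
  intro b hb
  obtain ⟨p, hp, rfl⟩ := mem_image.mp hb
  have := hA hp
  simp only [mem_product, mem_range, Prod.map_fst, Prod.map_snd] at this ⊢
  exact ⟨Nat.div_lt_of_lt_mul this.1, Nat.div_lt_of_lt_mul this.2⟩

theorem contract_image_swap : contract K (A.image Prod.swap) = (contract K A).image Prod.swap := by
  simp only [contract, image_image]
  rfl

theorem blockCols_image_swap (b : ℕ × ℕ) :
    blockCols K (A.image Prod.swap) b.swap = blockRows K A b := by
  ext x
  simp [blockCols, blockRows, block, Prod.ext_iff, and_comm]

theorem subset_Ico_of_forall_div_eq (hK : 0 < K) {s : Finset ℕ} {J : ℕ} (h : ∀ x ∈ s, x / K = J) :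
    s ⊆ Ico (J * K) ((J + 1) * K) := by
  intro x hx
  have := h x hx
  rw [mem_Ico]
  constructor
  · rw [← this]; exact Nat.div_mul_le_self x K
  · rw [← this]; exact Nat.lt_mul_of_div_lt (by omega) hK

theorem card_le_of_forall_div_eq (hK : 0 < K) {s : Finset ℕ} {J : ℕ} (h : ∀ x ∈ s, x / K = J) :
    s.card ≤ K := by
  simpa [add_one_mul] using card_le_card (subset_Ico_of_forall_div_eq hK h)

theorem div_eq_of_mem_blockRows {b : ℕ × ℕ} {x : ℕ} (hx : x ∈ blockRows K A b) : x / K = b.1 := by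
  obtain ⟨p, hp, rfl⟩ := mem_image.mp hx
  exact congrArg Prod.fst (mem_filter.mp hp).2

theorem div_eq_of_mem_blockCols {b : ℕ × ℕ} {x : ℕ} (hx : x ∈ blockCols K A b) : x / K = b.2 := by
  obtain ⟨p, hp, rfl⟩ := mem_image.mp hx
  exact congrArg Prod.snd (mem_filter.mp hp).2

theorem card_block_le (hK : 0 < K) (k : ℕ) (b : ℕ × ℕ) :
    (block K A b).card ≤ (if k ≤ (blockCols K A b).card then K ^ 2 else 0) +
      (if k ≤ (blockRows K A b).card then K ^ 2 else 0) + (k - 1) ^ 2 := by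
  have hprod : (block K A b).card ≤ (blockRows K A b).card * (blockCols K A b).card :=
    (card_le_card subset_product).trans (card_product _ _).le
  have hrows := card_le_of_forall_div_eq hK fun _ hx => div_eq_of_mem_blockRows (A := A) (b := b) hx
  have hcols := card_le_of_forall_div_eq hK fun _ hx => div_eq_of_mem_blockCols (A := A) (b := b) hx
  have hsq : (blockRows K A b).card * (blockCols K A b).card ≤ K ^ 2 :=
    sq K ▸ Nat.mul_le_mul hrows hcols
  split_ifs with hwide htall <;> try omega
  calc (block K A b).card ≤ (k - 1) * (k - 1) := hprod.trans (Nat.mul_le_mul (by omega) (by omega))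
    _ = 0 + 0 + (k - 1) ^ 2 := by ring

/-- Marcus–Tardos: otherwise, by pigeonhole over the `k`-subsets of the `K` columns, `k` of these
blocks share `k` occupied columns, and choosing in the `i`-th of them a cell in the `σ i`-th of
those columns gives a copy of `σ`. -/
theorem card_le_of_forall_le_card_blockCols (hK : 0 < K) {k : ℕ} {σ : Equiv.Perm (Fin k)}
    (hA : ¬ContainsPattern σ A) {J : ℕ} {S : Finset ℕ}
    (hS : ∀ I ∈ S, k ≤ (blockCols K A (I, J)).card) : S.card ≤ (k - 1) * K.choose k := by
  by_contra! hbig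
  choose! T hTsub hTcard using fun I hI => exists_subset_card_eq (hS I hI)
  have hmaps : ∀ I ∈ S, T I ∈ (Ico (J * K) ((J + 1) * K)).powersetCard k := fun I hI =>
    mem_powersetCard.mpr ⟨(hTsub I hI).trans
      (subset_Ico_of_forall_div_eq hK fun _ hx => div_eq_of_mem_blockCols hx), hTcard I hI⟩
  have hcard : ((Ico (J * K) ((J + 1) * K)).powersetCard k).card = K.choose k := by
    simp [add_one_mul]
  obtain ⟨T₀, hT₀, hfiber⟩ := exists_lt_card_fiber_of_mul_lt_card_of_maps_to (n := k - 1) hmaps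
    (by rwa [hcard, mul_comm])
  obtain ⟨R, hRsub, hRcard⟩ := exists_subset_card_eq (show k ≤ (S.filter (T · = T₀)).card by omega)
  have hT₀card := (mem_powersetCard.mp hT₀).2
  set rows := R.orderEmbOfFin hRcard
  set cols := T₀.orderEmbOfFin hT₀card
  have hcell : ∀ i, ∃ p ∈ A, p.1 / K = rows i ∧ p.2 = cols (σ i) := by
    intro i
    have hI := mem_filter.mp (hRsub (R.orderEmbOfFin_mem hRcard i))
    have hcol : cols (σ i) ∈ blockCols K A (rows i, J) :=
      hTsub _ hI.1 (hI.2 ▸ T₀.orderEmbOfFin_mem hT₀card _)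
    obtain ⟨p, hp, hpcol⟩ := mem_image.mp hcol
    exact ⟨p, (mem_filter.mp hp).1, congrArg Prod.fst (mem_filter.mp hp).2, hpcol⟩
  choose p hpA hprow hpcol using hcell
  refine hA ⟨fun i => (p i).1, cols, fun i j hij => Nat.lt_of_div_lt_div (c := K) ?_,
    cols.strictMono, fun i => hpcol i ▸ hpA i⟩
  simpa only [hprow] using rows.strictMono hij

theorem card_filter_wide_le (hK : 0 < K) {k : ℕ} {σ : Equiv.Perm (Fin k)}
    (hA : ¬ContainsPattern σ A) :
    ((contract K A).filter (fun b => k ≤ (blockCols K A b).card)).card ≤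
      (k - 1) * K.choose k * ((contract K A).image Prod.snd).card := by
  set W := (contract K A).filter (fun b => k ≤ (blockCols K A b).card)
  calc W.card ≤ (k - 1) * K.choose k * (W.image Prod.snd).card :=
        card_le_mul_card_image W _ fun J _ => ?_
    _ ≤ _ := Nat.mul_le_mul_left _ (card_le_card (image_subset_image (filter_subset _ _)))
  have hinj : Set.InjOn Prod.fst (W.filter (·.2 = J) : Set (ℕ × ℕ)) := fun b hb b' hb' h =>
    Prod.ext h ((mem_filter.mp hb).2.trans (mem_filter.mp hb').2.symm)
  rw [← card_image_of_injOn hinj]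
  refine card_le_of_forall_le_card_blockCols hK hA (J := J) fun I hI => ?_
  obtain ⟨b, hb, rfl⟩ := mem_image.mp hI
  obtain ⟨hbW, rfl⟩ := mem_filter.mp hb
  exact (mem_filter.mp hbW).2

theorem card_filter_tall_le (hK : 0 < K) {k : ℕ} {σ : Equiv.Perm (Fin k)}
    (hA : ¬ContainsPattern σ A) :
    ((contract K A).filter (fun b => k ≤ (blockRows K A b).card)).card ≤
      (k - 1) * K.choose k * ((contract K A).image Prod.fst).card := by
  have h := card_filter_wide_le hK (containsPattern_image_swap_iff.not.mpr hA)
  rw [contract_image_swap, image_image, filter_image,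
    card_image_of_injective _ Prod.swap_injective] at h
  simpa only [Function.comp_def, blockCols_image_swap, Prod.snd_swap] using h

theorem card_le_card_contract_of_not_containsPattern (hK : 0 < K) {k : ℕ} {σ : Equiv.Perm (Fin k)}
    (hA : ¬ContainsPattern σ A) {m : ℕ} (hB : contract K A ⊆ range m ×ˢ range m) :
    A.card ≤ 2 * K ^ 2 * ((k - 1) * K.choose k) * m + (k - 1) ^ 2 * (contract K A).card := by
  set B := contract K A
  have hrows : (B.image Prod.fst).card ≤ m := card_range m ▸ card_le_card
    (image_subset_iff.mpr fun b hb => (mem_product.mp (hB hb)).1)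
  have hcols : (B.image Prod.snd).card ≤ m := card_range m ▸ card_le_card
    (image_subset_iff.mpr fun b hb => (mem_product.mp (hB hb)).2)
  have hwide := (card_filter_wide_le hK hA).trans (Nat.mul_le_mul_left _ hcols)
  have htall := (card_filter_tall_le hK hA).trans (Nat.mul_le_mul_left _ hrows)
  calc A.card = ∑ b ∈ B, (block K A b).card := card_eq_sum_card_image _ A
    _ ≤ ∑ b ∈ B, ((if k ≤ (blockCols K A b).card then K ^ 2 else 0) +
          (if k ≤ (blockRows K A b).card then K ^ 2 else 0) + (k - 1) ^ 2) :=
        sum_le_sum fun b _ => card_block_le hK k b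
    _ = (B.filter (fun b => k ≤ (blockCols K A b).card)).card * K ^ 2 +
          (B.filter (fun b => k ≤ (blockRows K A b).card)).card * K ^ 2 + B.card * (k - 1) ^ 2 := by
        simp only [sum_add_distrib, ← sum_filter, sum_const, smul_eq_mul]
    _ ≤ (k - 1) * K.choose k * m * K ^ 2 + (k - 1) * K.choose k * m * K ^ 2 +
          B.card * (k - 1) ^ 2 := by gcongr
    _ = _ := by ring

end Contract

theorem exists_le_pow_le_mul {b n : ℕ} (hb : 1 < b) (hn : n ≠ 0) : ∃ t, n ≤ b ^ t ∧ b ^ t ≤ b * n :=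
  ⟨Nat.log b n + 1, (Nat.lt_pow_succ_log_self hb n).le,
    pow_succ' b _ ▸ Nat.mul_le_mul_left b (Nat.pow_log_le_self b hn)⟩

section FurediHajnal

variable {k : ℕ} (σ : Equiv.Perm (Fin k))

theorem card_le_of_not_containsPattern_of_subset_pow (hk : 2 ≤ k) (t : ℕ) {A : Finset (ℕ × ℕ)}
    (hA : A ⊆ range ((k ^ 2) ^ t) ×ˢ range ((k ^ 2) ^ t)) (hσ : ¬ContainsPattern σ A) :
    A.card ≤ 2 * (k ^ 2) ^ 2 * ((k - 1) * (k ^ 2).choose k) * (k ^ 2) ^ t := by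
  set c := 2 * (k ^ 2) ^ 2 * ((k - 1) * (k ^ 2).choose k)
  induction t generalizing A with
  | zero =>
    have : 0 < (k ^ 2).choose k := Nat.choose_pos (Nat.le_self_pow two_ne_zero k)
    have : 0 < k - 1 := by omega
    have hc : 0 < c := by positivity
    calc A.card ≤ (range 1 ×ˢ range 1).card := card_le_card (by simpa using hA)
      _ = 1 := rfl
      _ ≤ c * (k ^ 2) ^ 0 := by rw [pow_zero, mul_one]; exact hc
  | succ t ih =>
    rw [pow_succ'] at hA ⊢
    have hB := contract_subset_range hA
    have hrec := card_le_card_contract_of_not_containsPattern (by positivity) hσ hB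
    have hcontract := ih hB (mt ContainsPattern.of_contract hσ)
    have hsq : (k - 1) ^ 2 + 1 ≤ k ^ 2 := by
      obtain ⟨j, rfl⟩ : ∃ j, k = j + 1 := ⟨k - 1, by omega⟩
      simp only [Nat.add_sub_cancel]
      nlinarith
    calc A.card ≤ c * (k ^ 2) ^ t + (k - 1) ^ 2 * (c * (k ^ 2) ^ t) :=
          hrec.trans (Nat.add_le_add_left (Nat.mul_le_mul_left _ hcontract) _)
      _ = ((k - 1) ^ 2 + 1) * (c * (k ^ 2) ^ t) := by ring
      _ ≤ k ^ 2 * (c * (k ^ 2) ^ t) := Nat.mul_le_mul_right _ hsq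
      _ = c * (k ^ 2 * (k ^ 2) ^ t) := by ring

theorem exists_card_le_mul_of_not_containsPattern (hk : 2 ≤ k) :
    ∃ c, ∀ n (A : Finset (ℕ × ℕ)), A ⊆ range n ×ˢ range n → ¬ContainsPattern σ A →
      A.card ≤ c * n := by
  refine ⟨2 * (k ^ 2) ^ 2 * ((k - 1) * (k ^ 2).choose k) * k ^ 2, fun n A hA hσ => ?_⟩
  rcases n.eq_zero_or_pos with rfl | hn
  · simp_all
  have hK : 1 < k ^ 2 := Nat.one_lt_pow two_ne_zero (by omega)
  obtain ⟨t, hnt, htn⟩ := exists_le_pow_le_mul hK hn.ne'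
  have hsub := product_subset_product (range_subset_range.mpr hnt) (range_subset_range.mpr hnt)
  calc A.card ≤ _ := card_le_of_not_containsPattern_of_subset_pow σ hk t (hA.trans hsub) hσ
    _ ≤ _ := Nat.mul_le_mul_left _ htn
    _ = _ := by ring

end FurediHajnal

section Klazar

variable {k : ℕ} (σ : Equiv.Perm (Fin k))

open Classical in
noncomputable def avoiders (n : ℕ) : Finset (Finset (ℕ × ℕ)) :=
  (range n ×ˢ range n).powerset.filter (¬ContainsPattern σ ·)

variable {σ} in
theorem mem_avoiders {n : ℕ} {A : Finset (ℕ × ℕ)} :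
    A ∈ avoiders σ n ↔ A ⊆ range n ×ˢ range n ∧ ¬ContainsPattern σ A := by
  simp [avoiders]

theorem avoiders_subset_powerset (n : ℕ) : avoiders σ n ⊆ (range n ×ˢ range n).powerset :=
  fun _ hA => mem_powerset.mpr (mem_avoiders.mp hA).1

theorem avoiders_mono {n n' : ℕ} (h : n ≤ n') : avoiders σ n ⊆ avoiders σ n' := fun A hA => by
  rw [mem_avoiders] at hA ⊢
  have := range_subset_range.mpr h
  exact ⟨hA.1.trans (product_subset_product this this), hA.2⟩

theorem card_avoiders_mul_le {K N L : ℕ} (hL : ∀ B ∈ avoiders σ N, B.card ≤ L) :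
    (avoiders σ (K * N)).card ≤ 2 ^ (K ^ 2 * L) * (avoiders σ N).card := by
  refine card_le_mul_card_image_of_maps_to (f := contract K) (fun A hA => ?_) _ fun B hB => ?_
  · rw [mem_avoiders] at hA ⊢
    exact ⟨contract_subset_range hA.1, mt ContainsPattern.of_contract hA.2⟩
  set U := (B ×ˢ (range K ×ˢ range K)).image
    fun x => (K * x.1.1 + x.2.1, K * x.1.2 + x.2.2)
  have hU : U.card ≤ K ^ 2 * L := card_image_le.trans <| by
    rw [card_product, card_product, card_range]
    nlinarith [hL B hB]
  calc _ ≤ U.powerset.card := card_le_card fun A hA => ?_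
    _ = 2 ^ U.card := card_powerset U
    _ ≤ _ := Nat.pow_le_pow_right two_pos hU
  obtain ⟨hAN, rfl⟩ := mem_filter.mp hA
  refine mem_powerset.mpr fun p hp => mem_image.mpr
    ⟨((p.1 / K, p.2 / K), (p.1 % K, p.2 % K)), ?_, by simp [Nat.div_add_mod]⟩
  have hK : 0 < K := Nat.pos_of_ne_zero fun h => by simpa [h] using (mem_avoiders.mp hAN).1 hp
  simp only [mem_product, mem_range, Nat.mod_lt _ hK, and_true]
  exact mem_image_of_mem _ hp

theorem card_avoiders_two_pow_le {c : ℕ} (hc : ∀ n, ∀ B ∈ avoiders σ n, B.card ≤ c * n) (t : ℕ) :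
    (avoiders σ (2 ^ t)).card ≤ (2 * 16 ^ c) ^ 2 ^ t := by
  induction t with
  | zero =>
    calc (avoiders σ 1).card ≤ (range 1 ×ˢ range 1).powerset.card :=
          card_le_card (avoiders_subset_powerset σ 1)
      _ = 2 := rfl
      _ ≤ (2 * 16 ^ c) ^ 2 ^ 0 := by
          rw [pow_zero, pow_one]
          exact Nat.le_mul_of_pos_right 2 (by positivity)
  | succ t ih =>
    have hfib : 2 ^ (2 ^ 2 * (c * 2 ^ t)) = (16 ^ c) ^ 2 ^ t := by rw [pow_mul, pow_mul]; norm_num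
    calc (avoiders σ (2 ^ (t + 1))).card
        ≤ 2 ^ (2 ^ 2 * (c * 2 ^ t)) * (avoiders σ (2 ^ t)).card := by
          rw [pow_succ']; exact card_avoiders_mul_le σ (hc _)
      _ ≤ (2 * 16 ^ c) ^ 2 ^ t * (2 * 16 ^ c) ^ 2 ^ t := by
          rw [hfib]
          gcongr
          exact Nat.le_mul_of_pos_left _ two_pos
      _ = (2 * 16 ^ c) ^ 2 ^ (t + 1) := by rw [← pow_add, pow_succ, mul_two]

theorem exists_card_avoiders_le (hk : 2 ≤ k) : ∃ C, 0 < C ∧ ∀ n, (avoiders σ n).card ≤ C ^ n := by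
  obtain ⟨c, hc⟩ := exists_card_le_mul_of_not_containsPattern σ hk
  refine ⟨(2 * 16 ^ c) ^ 2, by positivity, fun n => ?_⟩
  rcases n.eq_zero_or_pos with rfl | hn
  · exact card_le_card (avoiders_subset_powerset σ _)
  obtain ⟨t, hnt, htn⟩ := exists_le_pow_le_mul one_lt_two hn.ne'
  calc (avoiders σ n).card ≤ (avoiders σ (2 ^ t)).card := card_le_card (avoiders_mono σ hnt)
    _ ≤ (2 * 16 ^ c) ^ 2 ^ t :=
        card_avoiders_two_pow_le σ (fun n B hB => (mem_avoiders.mp hB).elim (hc n B)) t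
    _ ≤ (2 * 16 ^ c) ^ (2 * n) := Nat.pow_le_pow_right (by positivity) htn
    _ = ((2 * 16 ^ c) ^ 2) ^ n := pow_mul _ _ _

end Klazar

section Permutation

def permMatrix {n : ℕ} (ρ : Equiv.Perm (Fin n)) : Finset (ℕ × ℕ) :=
  univ.image fun i : Fin n => ((i : ℕ), (ρ i : ℕ))

variable {n : ℕ}

theorem permMatrix_subset_range (ρ : Equiv.Perm (Fin n)) : permMatrix ρ ⊆ range n ×ˢ range n := by
  intro p hp
  obtain ⟨i, -, rfl⟩ := mem_image.mp hp
  simp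

theorem permMatrix_injective : Function.Injective (permMatrix (n := n)) := by
  intro ρ ρ' h
  ext i
  have hi : ((i : ℕ), (ρ i : ℕ)) ∈ permMatrix ρ' := h ▸ mem_image_of_mem _ (mem_univ i)
  obtain ⟨j, -, hj⟩ := mem_image.mp hi
  obtain ⟨rfl, hρ⟩ : j = i ∧ (ρ' j : ℕ) = ρ i := by simpa [Prod.ext_iff, Fin.val_inj] using hj
  exact hρ.symm

theorem permLE_of_containsPattern_permMatrix {k : ℕ} {π : Equiv.Perm (Fin k)}
    {ρ : Equiv.Perm (Fin n)} (h : ContainsPattern π (permMatrix ρ)) : PermLE π ρ := by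
  obtain ⟨r, c, hr, hc, hmem⟩ := h
  have hcell : ∀ i, ∃ x : Fin n, (x : ℕ) = r i ∧ (ρ x : ℕ) = c (π i) := fun i => by
    simpa [permMatrix, Prod.ext_iff] using hmem i
  choose x hxr hxc using hcell
  refine ⟨x, fun i j hij => ?_, fun s t => ?_⟩
  · simpa only [Fin.lt_def, hxr] using hr hij
  · simp only [Fin.lt_def, hxc, hc.lt_iff_lt]

theorem ncard_setOf_not_permLE_le {k : ℕ} (π : Equiv.Perm (Fin k)) :
    {ρ : Equiv.Perm (Fin n) | ¬PermLE π ρ}.ncard ≤ (avoiders π n).card := by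
  rw [← Set.ncard_coe_finset]
  refine Set.ncard_le_ncard_of_injOn permMatrix (fun ρ hρ => ?_) permMatrix_injective.injOn
  exact mem_avoiders.mpr ⟨permMatrix_subset_range ρ, mt permLE_of_containsPattern_permMatrix hρ⟩

theorem permLE_of_le_one {m : ℕ} (π : Equiv.Perm (Fin m)) (ρ : Equiv.Perm (Fin n)) (hm : m ≤ 1)
    (hmn : m ≤ n) : PermLE π ρ := by
  have := Fin.subsingleton_iff_le_one.mpr hm
  refine ⟨Fin.castLE hmn, Fin.strictMono_castLE hmn, fun r s => ?_⟩
  rw [Subsingleton.elim r s]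
  simp

end Permutation

theorem exists_two_le_not_mem {P : ∀ n : ℕ, Set (Equiv.Perm (Fin n))}
    (hdown : ∀ (m n : ℕ) (π : Equiv.Perm (Fin m)) (ρ : Equiv.Perm (Fin n)),
      PermLE π ρ → ρ ∈ P n → π ∈ P m)
    (hproper : ∃ (n : ℕ) (π : Equiv.Perm (Fin n)), π ∉ P n) :
    ∃ k, 2 ≤ k ∧ ∃ π : Equiv.Perm (Fin k), π ∉ P k := by
  obtain ⟨n, π, hπ⟩ := hproper
  by_cases hn : 2 ≤ n
  · exact ⟨n, hn, π, hπ⟩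
  · exact ⟨2, le_rfl, 1, fun h => hπ (hdown n 2 π 1 (permLE_of_le_one π 1 (by omega) (by omega)) h)⟩

/-- Marcus–Tardos theorem (Stanley–Wilf conjecture).  Every downset of
permutations other than the set of all permutations grows at most exponentially. -/
theorem stmt_4 (P : ∀ n : ℕ, Set (Equiv.Perm (Fin n)))
    (hdown : ∀ (m n : ℕ) (π : Equiv.Perm (Fin m)) (ρ : Equiv.Perm (Fin n)),
      PermLE π ρ → ρ ∈ P n → π ∈ P m)
    (hproper : ∃ (n : ℕ) (π : Equiv.Perm (Fin n)), π ∉ P n) :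
    ∃ c : ℝ, 1 < c ∧ ∀ n : ℕ, 1 ≤ n → ((P n).ncard : ℝ) < c ^ n := by
  obtain ⟨k, hk, π, hπ⟩ := exists_two_le_not_mem hdown hproper
  obtain ⟨C, hC, hav⟩ := exists_card_avoiders_le π hk
  refine ⟨C + 1, by simpa using hC, fun n hn => ?_⟩
  have hP : (P n).ncard ≤ C ^ n :=
    calc (P n).ncard ≤ {ρ : Equiv.Perm (Fin n) | ¬PermLE π ρ}.ncard :=
          Set.ncard_le_ncard fun ρ hρ hπρ => hπ (hdown k n π ρ hπρ hρ)
      _ ≤ (avoiders π n).card := ncard_setOf_not_permLE_le π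
      _ ≤ C ^ n := hav n
  calc ((P n).ncard : ℝ) ≤ (C : ℝ) ^ n := by exact_mod_cast hP
    _ < (C + 1 : ℝ) ^ n := pow_lt_pow_left₀ (lt_add_one _) C.cast_nonneg (by omega)
end

section
/- If P is a downset of finite words over a finite alphabet A in the subword ordering (the contiguous-factor ordering), then either f_P(n) is bounded, or f_P(n) ≥ n + 1 for every n ∈ ℕ. -/
/-!
Suppose `f_P(K) ≤ K` for some `K`. In a word `w ∈ P` of length `n ≥ 3K`, pigeonhole among the
first `K + 1` and among the last `K + 1` windows of length `K` gives repeated windows, so `w` is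
periodic near both of its ends; continuing it periodically in both directions yields a
bi-infinite word all of whose `K`-windows are windows of `w`, hence at most `K` of them. By the
Morse–Hedlund argument such a word is periodic with period at most `K`: the number of distinct
`m`-windows is nondecreasing in `m`, so for some `m < K` it does not grow from `m` to `m + 1`,
and then every `m`-window determines its neighbours on both sides. Thus `w` is determined by its
first `2K` letters, its last `K` letters and a period `ρ ≤ K`, which bounds `f_P(n)`.
-/

namespace FactorComplexity

variable {α : Type*}

def window (z : ℤ → α) (m : ℕ) (t : ℤ) : Fin m → α := fun x => z (t + x)

lemma window_congr {z y : ℤ → α} {K : ℕ} {t : ℤ} (h : ∀ x : ℕ, x < K → z (t + x) = y (t + x)) :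
    window z K t = window y K t :=
  funext fun x => h x x.2

lemma apply_eq_of_window_eq {u v : ℤ → α} {m : ℕ} {s t : ℤ} (h : window u m s = window v m s)
    (hst : s ≤ t) (ht : t < s + m) : u t = v t := by
  have := congrFun h ⟨(t - s).toNat, by omega⟩
  simpa only [window, Int.toNat_of_nonneg (sub_nonneg.2 hst), add_sub_cancel] using this

section Window

variable (z : ℤ → α)

lemma init_window (m : ℕ) (t : ℤ) : Fin.init (window z (m + 1) t) = window z m t := rfl

lemma tail_window (m : ℕ) (t : ℤ) : Fin.tail (window z (m + 1) t) = window z m (t + 1) := by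
  funext x
  simp only [Fin.tail, window, Fin.val_succ, Nat.cast_add, Nat.cast_one]
  ring_nf

lemma range_window_eq_image_init (m : ℕ) :
    Set.range (window z m) = Fin.init '' Set.range (window z (m + 1)) := by
  rw [← Set.range_comp]
  rfl

lemma range_window_eq_image_tail (m : ℕ) :
    Set.range (window z m) = Fin.tail '' Set.range (window z (m + 1)) := by
  rw [← Set.range_comp]
  ext f
  simp only [Set.mem_range, Function.comp_apply, tail_window]
  exact ⟨fun ⟨t, ht⟩ => ⟨t - 1, by rwa [sub_add_cancel]⟩, fun ⟨t, ht⟩ => ⟨t + 1, ht⟩⟩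

variable [Finite α]

lemma monotone_ncard_range_window : Monotone fun m => (Set.range (window z m)).ncard := by
  refine monotone_nat_of_le_succ fun m => ?_
  rw [range_window_eq_image_init z m]
  exact Set.ncard_image_le (Set.toFinite _)

lemma window_eq_of_ncard_range_window_succ_eq {m : ℕ}
    (hm : (Set.range (window z (m + 1))).ncard = (Set.range (window z m)).ncard)
    {t t' : ℤ} (h : window z m t = window z m t') :
    window z (m + 1) t = window z (m + 1) t' ∧
      window z (m + 1) (t - 1) = window z (m + 1) (t' - 1) := by
  have hinit : Set.InjOn Fin.init (Set.range (window z (m + 1))) :=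
    Set.injOn_of_ncard_image_eq (by rw [← range_window_eq_image_init, hm])
  have htail : Set.InjOn Fin.tail (Set.range (window z (m + 1))) :=
    Set.injOn_of_ncard_image_eq (by rw [← range_window_eq_image_tail, hm])
  refine ⟨hinit ⟨t, rfl⟩ ⟨t', rfl⟩ h, htail ⟨t - 1, rfl⟩ ⟨t' - 1, rfl⟩ ?_⟩
  simpa only [tail_window, sub_add_cancel] using h

end Window

lemma exists_lt_window_eq {z : ℤ → α} {m K : ℕ} {S : Set (Fin m → α)} (hS : S.Finite)
    (hcard : S.ncard ≤ K) {a : ℤ} (hmem : ∀ t, a ≤ t → t ≤ a + K → window z m t ∈ S) :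
    ∃ i j, a ≤ i ∧ i < j ∧ j ≤ a + K ∧ window z m i = window z m j := by
  have hcard' : S.ncard < (Set.Icc a (a + K)).ncard := by
    rw [Set.ncard_eq_toFinset_card' (Set.Icc a _), Set.toFinset_Icc, Int.card_Icc]
    omega
  obtain ⟨i, hi, j, hj, hne, heq⟩ :=
    Set.exists_ne_map_eq_of_ncard_lt_of_maps_to hcard' (fun t ht => hmem t ht.1 ht.2) hS
  rcases hne.lt_or_gt with hij | hji
  · exact ⟨i, j, hi.1, hij, hj.2, heq⟩
  · exact ⟨j, i, hj.1, hji, hi.2, heq.symm⟩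

lemma exists_lt_eq_succ_of_monotone {f : ℕ → ℕ} (hf : Monotone f) (h0 : 0 < f 0) {K : ℕ}
    (hK : f K ≤ K) : ∃ m < K, f (m + 1) = f m := by
  by_contra! hne
  have grow : ∀ k ≤ K, f 0 + k ≤ f k := by
    intro k hk
    induction k with
    | zero => rfl
    | succ k ih =>
      have := (hf (Nat.le_add_right k 1)).lt_of_ne' (hne k hk)
      have := ih (by omega)
      omega
  have := grow K le_rfl
  omega

theorem exists_period_of_ncard_range_window_le [Finite α] (z : ℤ → α) {K : ℕ}
    (hK : (Set.range (window z K)).ncard ≤ K) :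
    ∃ ρ : ℕ, 0 < ρ ∧ ρ ≤ K ∧ ∀ t, z (t + ρ) = z t := by
  obtain ⟨m, hmK, hm⟩ := exists_lt_eq_succ_of_monotone (monotone_ncard_range_window z)
    ((Set.ncard_pos (Set.toFinite _)).2 (Set.range_nonempty _)) hK
  obtain ⟨i, j, hi, hij, hj, hwin⟩ := exists_lt_window_eq (z := z) (a := 0) (Set.toFinite _)
    ((monotone_ncard_range_window z hmK.le).trans hK) fun t _ _ => Set.mem_range_self t
  have shift : ∀ d : ℤ, window z m (i + d) = window z m (j + d) := by
    intro d
    induction d using Int.induction_on with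
    | zero => simpa using hwin
    | succ d ih =>
      have := congrArg Fin.tail (window_eq_of_ncard_range_window_succ_eq z hm ih).1
      simpa only [tail_window, add_assoc] using this
    | pred d ih =>
      have := congrArg Fin.init (window_eq_of_ncard_range_window_succ_eq z hm ih).2
      simpa only [init_window, add_sub_assoc] using this
  refine ⟨(j - i).toNat, by omega, by omega, fun t => ?_⟩
  have := congrFun (window_eq_of_ncard_range_window_succ_eq z hm (shift (t - i))).1 0
  simp only [window, Fin.val_zero, Nat.cast_zero, add_zero] at this
  rw [Int.toNat_of_nonneg (by omega)]
  convert this.symm using 2 <;> ring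

def IsPeriodOn (w : ℤ → α) (q a b : ℤ) : Prop :=
  ∀ t, a ≤ t → t + q < b → w (t + q) = w t

lemma IsPeriodOn.of_window_eq {w : ℤ → α} {K : ℕ} {i j : ℤ} (h : window w K i = window w K j) :
    IsPeriodOn w (j - i) i (j + K) := by
  intro t hit htb
  have := congrFun h ⟨(t - i).toNat, by omega⟩
  simp only [window, Int.toNat_of_nonneg (sub_nonneg.2 hit)] at this
  convert this.symm using 2 <;> ring

namespace IsPeriodOn

variable {w : ℤ → α} {q a b : ℤ}

lemma apply_add_mul (h : IsPeriodOn w q a b) (hq : 0 ≤ q) {t : ℤ} (ht : a ≤ t) (k : ℕ)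
    (hk : t + k * q < b) : w (t + k * q) = w t := by
  induction k with
  | zero => simp
  | succ k ih =>
    have hkq : 0 ≤ (k : ℤ) * q := by positivity
    push_cast at hk ⊢
    rw [add_one_mul, ← add_assoc, h _ (by omega) (by linarith), ih (by linarith)]

lemma apply_emod (h : IsPeriodOn w q a b) (hq : 0 < q) {t : ℤ} (ht : a ≤ t) (htb : t < b) :
    w (a + (t - a) % q) = w t := by
  have hdiv : 0 ≤ (t - a) / q := Int.ediv_nonneg (by omega) hq.le
  have hdecomp : a + (t - a) % q + ((t - a) / q).toNat * q = t := by
    rw [Int.toNat_of_nonneg hdiv]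
    linarith [Int.emod_add_mul_ediv (t - a) q]
  have := h.apply_add_mul hq.le (t := a + (t - a) % q)
    (by linarith [Int.emod_nonneg (t - a) hq.ne']) ((t - a) / q).toNat (by omega)
  rwa [hdecomp, eq_comm] at this

def extend (w : ℤ → α) (a q : ℤ) : ℤ → α := fun t => w (a + (t - a) % q)

lemma extend_eq (h : IsPeriodOn w q a b) (hq : 0 < q) {t : ℤ} (ht : a ≤ t) (htb : t < b) :
    extend w a q t = w t :=
  h.apply_emod hq ht htb

lemma window_extend (h : IsPeriodOn w q a b) (hq : 0 < q) {K : ℕ} (hb : a + q + K ≤ b) (t : ℤ) :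
    window (extend w a q) K t = window w K (a + (t - a) % q) := by
  funext x
  have hr := Int.emod_nonneg (t - a) hq.ne'
  have hr' := Int.emod_lt_of_pos (t - a) hq
  simp only [window, extend]
  rw [← h.apply_emod hq (t := a + (t - a) % q + x) (by omega) (by omega),
    show a + (t - a) % q + x - a = (t - a) % q + x by ring, Int.emod_add_emod,
    show t - a + x = t + x - a by ring]

lemma eqOn {u v : ℤ → α} (hu : IsPeriodOn u q a b) (hv : IsPeriodOn v q a b) (hq : 0 < q)
    (h : ∀ t, a ≤ t → t < a + q → u t = v t) :
    ∀ t, a ≤ t → t < b → u t = v t := by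
  suffices ∀ k : ℕ, ∀ t, a ≤ t → t < a + q + k → t < b → u t = v t from
    fun t ht htb => this (t - a).toNat t ht (by omega) htb
  intro k
  induction k with
  | zero => exact fun t ht htq _ => h t ht (by simpa using htq)
  | succ k ih =>
    intro t ht htk htb
    rcases lt_or_ge t (a + q + k) with htk' | htk'
    · exact ih t ht htk' htb
    · have := ih (t - q) (by omega) (by omega) (by omega)
      rwa [← sub_add_cancel t q, hu _ (by omega) (by simpa using htb),
        hv _ (by omega) (by simpa using htb)]

end IsPeriodOn

lemma exists_extension_of_isPeriodOn {w : ℤ → α} {K : ℕ} {q₁ a₁ b₁ q₂ a₂ b₂ : ℤ}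
    (h₁ : IsPeriodOn w q₁ a₁ b₁) (h₂ : IsPeriodOn w q₂ a₂ b₂) (hq₁ : 0 < q₁) (hq₂ : 0 < q₂)
    (hb₁ : a₁ + q₁ + K ≤ b₁) (hb₂ : a₂ + q₂ + K ≤ b₂) (ha : a₁ ≤ a₂) (hb : b₁ ≤ b₂) :
    ∃ z : ℤ → α, (∀ t, a₁ ≤ t → t < b₂ → z t = w t) ∧
      Set.range (window z K) ⊆ window w K '' Set.Icc a₁ (b₂ - K) := by
  refine ⟨fun t => if t < a₁ then IsPeriodOn.extend w a₁ q₁ t else if t < b₂ then w t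
    else IsPeriodOn.extend w a₂ q₂ t, fun t ht htb => by simp [not_lt.2 ht, htb], ?_⟩
  rintro _ ⟨t, rfl⟩
  rcases lt_or_ge t a₁ with ht | ht
  · have hr := Int.emod_nonneg (t - a₁) hq₁.ne'
    have hr' := Int.emod_lt_of_pos (t - a₁) hq₁
    refine ⟨a₁ + (t - a₁) % q₁, ⟨by omega, by omega⟩, ?_⟩
    rw [← h₁.window_extend hq₁ hb₁]
    refine window_congr fun x hx => ?_
    split_ifs with hlt hlt'
    · rfl
    · exact h₁.extend_eq hq₁ (by omega) (by omega)
    · omega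
  rcases le_or_gt (t + K) b₂ with htK | htK
  · exact ⟨t, ⟨ht, by omega⟩, window_congr fun x hx => by rw [if_neg (by omega), if_pos (by omega)]⟩
  have hr := Int.emod_nonneg (t - a₂) hq₂.ne'
  have hr' := Int.emod_lt_of_pos (t - a₂) hq₂
  refine ⟨a₂ + (t - a₂) % q₂, ⟨by omega, by omega⟩, ?_⟩
  rw [← h₂.window_extend hq₂ hb₂]
  refine window_congr fun x hx => ?_
  split_ifs with hlt hlt'
  · omega
  · exact h₂.extend_eq hq₂ (by omega) hlt'
  · rfl

theorem exists_isPeriodOn_of_ncard_windows_le [Finite α] (w : ℤ → α) {n K : ℕ}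
    (hn : 3 * K ≤ n) (hK : (window w K '' Set.Icc 0 (n - K : ℤ)).ncard ≤ K) :
    ∃ ρ : ℕ, 0 < ρ ∧ ρ ≤ K ∧ IsPeriodOn w ρ K (n - K) := by
  obtain ⟨i₁, j₁, hi₁, hij₁, hj₁, h₁⟩ := exists_lt_window_eq (Set.toFinite _) hK (a := 0)
    fun t ht ht' => ⟨t, ⟨ht, by omega⟩, rfl⟩
  obtain ⟨i₂, j₂, hi₂, hij₂, hj₂, h₂⟩ := exists_lt_window_eq (Set.toFinite _) hK
    (a := n - 2 * K) fun t ht ht' => ⟨t, ⟨by omega, by omega⟩, rfl⟩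
  obtain ⟨z, hzw, hz⟩ := exists_extension_of_isPeriodOn (K := K) (IsPeriodOn.of_window_eq h₁)
    (IsPeriodOn.of_window_eq h₂) (by omega) (by omega) (by omega) (by omega) (by omega)
    (by omega)
  have hzK : (Set.range (window z K)).ncard ≤ K :=
    (Set.ncard_le_ncard (hz.trans (Set.image_mono (Set.Icc_subset_Icc hi₁ (by omega))))
      (Set.toFinite _)).trans hK
  obtain ⟨ρ, hρ, hρK, hper⟩ := exists_period_of_ncard_range_window_le z hzK
  refine ⟨ρ, hρ, hρK, fun t ht htn => ?_⟩
  rw [← hzw t (by omega) (by omega), ← hzw (t + ρ) (by omega) (by omega), hper]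


/-- `toNat` clamps negative positions to `0`; they are never read. -/
def letterAt (l : List α) (t : ℤ) : Option α := l[t.toNat]?

lemma window_letterAt (l : List α) (K s : ℕ) :
    window (letterAt l) K s = window (letterAt ((l.drop s).take K)) K 0 := by
  funext x
  have hx : ((s : ℤ) + x).toNat = s + x := by omega
  simp [window, letterAt, hx, List.getElem?_drop]

lemma ncard_windows_letterAt_le [Finite α] {P : Set (List α)}
    (hdown : ∀ u v : List α, u <:+: v → v ∈ P → u ∈ P) {l : List α} (hl : l ∈ P) (K : ℕ) :
    (window (letterAt l) K '' Set.Icc 0 (l.length - K : ℤ)).ncard ≤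
      {u ∈ P | u.length = K}.ncard := by
  have hfin : {u ∈ P | u.length = K}.Finite :=
    (List.finite_length_eq α K).subset fun u hu => hu.2
  calc _ ≤ ((fun u => window (letterAt u) K 0) '' {u ∈ P | u.length = K}).ncard := by
        refine Set.ncard_le_ncard ?_ (hfin.image _)
        rintro _ ⟨s, ⟨hs, hsn⟩, rfl⟩
        lift s to ℕ using hs
        refine ⟨(l.drop s).take K, ⟨hdown _ _ ?_ hl, ?_⟩, (window_letterAt l K s).symm⟩
        · exact ((l.drop s).take_prefix K).isInfix.trans (l.drop_suffix s).isInfix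
        · simp only [List.length_take, List.length_drop]
          omega
    _ ≤ _ := Set.ncard_image_le hfin

theorem ncard_length_eq_le [Finite α] {P : Set (List α)}
    (hdown : ∀ u v : List α, u <:+: v → v ∈ P → u ∈ P) {K n : ℕ}
    (hK : {u ∈ P | u.length = K}.ncard ≤ K) (hn : 3 * K ≤ n) :
    {w ∈ P | w.length = n}.ncard ≤ (Set.univ ×ˢ Set.univ ×ˢ Set.Iic K :
      Set ((Fin (2 * K) → Option α) × (Fin K → Option α) × ℕ)).ncard := by
  have key : ∀ l ∈ {w ∈ P | w.length = n},
      ∃ ρ : ℕ, 0 < ρ ∧ ρ ≤ K ∧ IsPeriodOn (letterAt l) ρ K (n - K) := by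
    rintro l ⟨hl, rfl⟩
    exact exists_isPeriodOn_of_ncard_windows_le _ hn
      ((ncard_windows_letterAt_le hdown hl K).trans hK)
  choose! ρ hρ hρK hper using key
  refine Set.ncard_le_ncard_of_injOn
    (fun l => (window (letterAt l) (2 * K) 0, window (letterAt l) K (n - K), ρ l))
    (fun l hl => ⟨trivial, trivial, hρK l hl⟩) ?_ (Set.toFinite _)
  rintro l hl l' hl' heq
  simp only [Prod.mk.injEq] at heq
  obtain ⟨hpre, hsuf, hρeq⟩ := heq
  have hmid := (hper l hl).eqOn (hρeq ▸ hper l' hl') (by exact_mod_cast hρ l hl)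
    fun t ht htρ => apply_eq_of_window_eq hpre (by omega) (by have := hρK l hl; omega)
  have hagree : ∀ t : ℤ, 0 ≤ t → letterAt l t = letterAt l' t := by
    intro t ht
    rcases lt_or_ge t K with htK | htK
    · exact apply_eq_of_window_eq hpre ht (by omega)
    rcases lt_or_ge t (n - K) with htn | htn
    · exact hmid t htK htn
    rcases lt_or_ge t n with htn' | htn'
    · exact apply_eq_of_window_eq hsuf htn (by omega)
    simp only [letterAt]
    rw [List.getElem?_eq_none (by rw [hl.2]; omega), List.getElem?_eq_none (by rw [hl'.2]; omega)]
  exact List.ext_getElem? fun p => by simpa [letterAt] using hagree p (by omega)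

theorem bddAbove_ncard_length_eq_of_ncard_le [Finite α] {P : Set (List α)}
    (hdown : ∀ u v : List α, u <:+: v → v ∈ P → u ∈ P) {K : ℕ}
    (hK : {u ∈ P | u.length = K}.ncard ≤ K) :
    BddAbove (Set.range fun n => {w ∈ P | w.length = n}.ncard) :=
  (Filter.isBoundedUnder_of_eventually_le (Filter.eventually_atTop.2
    ⟨3 * K, fun _ hn => ncard_length_eq_le hdown hK hn⟩)).bddAbove_range

end FactorComplexity

open FactorComplexity in
/-- Balogh–Bollobás.  If `P` is a downset of finite words over a finite
alphabet `A` in the subword (contiguous factor) ordering, then `f_P` is either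
bounded or satisfies `f_P(n) ≥ n + 1` for every `n ≥ 1`. -/
theorem stmt_14 {A : Type*} [Fintype A] (P : Set (List A))
    (hdown : ∀ u v : List A, u <:+: v → v ∈ P → u ∈ P) :
    (∃ C : ℕ, ∀ n : ℕ, {w ∈ P | w.length = n}.ncard ≤ C) ∨
    (∀ n : ℕ, 1 ≤ n → n + 1 ≤ {w ∈ P | w.length = n}.ncard) := by
  by_cases H : ∀ n : ℕ, 1 ≤ n → n + 1 ≤ {w ∈ P | w.length = n}.ncard
  · exact Or.inr H
  push Not at H
  obtain ⟨K, -, hK⟩ := H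
  obtain ⟨C, hC⟩ := bddAbove_ncard_length_eq_of_ncard_le hdown (Nat.le_of_lt_succ hK)
  exact Or.inl ⟨C, fun n => hC ⟨n, rfl⟩⟩
end

section
/- Fix k ∈ ℕ. If P ⊆ ℕ₀^k is a downset of k-tuples of nonnegative integers under the componentwise order, then there is a polynomial p(x) with rational coefficients such that f_P(n) = p(n) for all sufficiently large n, where f_P(n) = #{a ∈ P : a₁ + a₂ + ⋯ + a_k = n}. -/
/-!
Induct on `k`. The slices `P_m = {b | (m, b) ∈ P}` of a downset `P ⊆ ℕ^(k+1)` are downsets of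
`ℕ^k`, decreasing in `m`, and `f_P(n) = ∑_{m ≤ n} f_{P_m}(n - m)`. By Dickson's lemma `ℕ^k` is
well-quasi-ordered, so a decreasing chain of downsets is eventually constant: `P_m = P_M` for
`m ≥ M`. For `n ≥ M` this gives
`f_P(n) = ∑_{j ≤ n} f_{P_M}(j) + ∑_{m < M} (f_{P_m} - f_{P_M})(n - m)`,
and eventually polynomial functions are closed under shifts and, by Faulhaber's formula,
under partial sums.
-/

open Polynomial Finset Filter

instance LowerSet.wellFoundedLT {α : Type*} [Preorder α] [WellQuasiOrderedLE α] :
    WellFoundedLT (LowerSet α) := by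
  rw [WellFoundedLT, isWellFounded_iff, RelEmbedding.wellFounded_iff_isEmpty]
  refine ⟨fun D => ?_⟩
  have hD : StrictAnti D := fun _ _ h => D.map_rel_iff.2 h
  choose x hx hx' using fun n : ℕ =>
    Set.exists_of_ssubset (LowerSet.coe_ssubset_coe.2 (hD n.lt_succ_self))
  obtain ⟨i, j, hij, hle⟩ := wellQuasiOrdered_le x
  exact hx' i ((D (i + 1)).lower hle (hD.antitone hij (hx j)))

theorem Polynomial.exists_eval_sum_range (q : ℚ[X]) :
    ∃ Q : ℚ[X], ∀ n : ℕ, ∑ j ∈ range n, q.eval (j : ℚ) = Q.eval (n : ℚ) := by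
  induction q using Polynomial.induction_on' with
  | add p q hp hq =>
    obtain ⟨P, hP⟩ := hp
    obtain ⟨Q, hQ⟩ := hq
    exact ⟨P + Q, fun n => by simp [sum_add_distrib, hP n, hQ n]⟩
  | monomial d a =>
    refine ⟨C (a / (d + 1)) * (Polynomial.bernoulli (d + 1) - C (_root_.bernoulli (d + 1))),
      fun n => ?_⟩
    simp only [eval_monomial, ← mul_sum, eval_mul, eval_C, eval_sub]
    rw [← sum_range_pow_eq_bernoulli_sub n d]
    field_simp

def eventuallyPolynomial : Submodule ℚ (ℕ → ℚ) where
  carrier := {f | ∃ p : ℚ[X], ∀ᶠ n in atTop, f n = p.eval (n : ℚ)}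
  zero_mem' := ⟨0, by simp⟩
  add_mem' := by
    rintro f g ⟨p, hp⟩ ⟨q, hq⟩
    exact ⟨p + q, by filter_upwards [hp, hq] with n hf hg; simp [hf, hg]⟩
  smul_mem' := by
    rintro c f ⟨p, hp⟩
    exact ⟨C c * p, by filter_upwards [hp] with n hf; simp [hf]⟩

namespace eventuallyPolynomial

variable {f g : ℕ → ℚ}

theorem mem_of_eventuallyEq (hf : f ∈ eventuallyPolynomial) (hgf : g =ᶠ[atTop] f) :
    g ∈ eventuallyPolynomial := by
  obtain ⟨p, hp⟩ := hf
  exact ⟨p, hgf.trans hp⟩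

theorem comp_add_mem (hf : f ∈ eventuallyPolynomial) (c : ℕ) :
    (fun n => f (n + c)) ∈ eventuallyPolynomial := by
  obtain ⟨p, hp⟩ := hf
  refine ⟨p.comp (X + C (c : ℚ)), ?_⟩
  filter_upwards [(tendsto_add_atTop_nat c).eventually hp] with n hn
  simp [hn]

theorem comp_sub_mem (hf : f ∈ eventuallyPolynomial) (c : ℕ) :
    (fun n => f (n - c)) ∈ eventuallyPolynomial := by
  obtain ⟨p, hp⟩ := hf
  refine ⟨p.comp (X - C (c : ℚ)), ?_⟩
  filter_upwards [(tendsto_sub_atTop_nat c).eventually hp, eventually_ge_atTop c] with n hn hcn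
  simp [hn, Nat.cast_sub hcn]

theorem sum_range_mem (hf : f ∈ eventuallyPolynomial) :
    (fun n => ∑ j ∈ range n, f j) ∈ eventuallyPolynomial := by
  obtain ⟨q, hq⟩ := hf
  obtain ⟨N, hN⟩ := eventually_atTop.1 hq
  obtain ⟨Q, hQ⟩ := q.exists_eval_sum_range
  refine ⟨Q + C (∑ j ∈ range N, (f j - q.eval (j : ℚ))), ?_⟩
  filter_upwards [eventually_ge_atTop N] with n hn
  have hconst := eventually_constant_sum (u := fun j => f j - q.eval (j : ℚ))
    (fun j hj => sub_eq_zero.2 (hN j hj)) hn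
  rw [eval_add, eval_C, ← hQ, ← hconst, ← sum_add_distrib]
  simp

theorem sum_range_succ_comp_sub_mem {g : ℕ → ℕ → ℚ} (hg : ∀ m, g m ∈ eventuallyPolynomial)
    {M : ℕ} (hM : ∀ m ≥ M, g m = g M) :
    (fun n => ∑ m ∈ range (n + 1), g m (n - m)) ∈ eventuallyPolynomial := by
  have hstable : (fun n => ∑ j ∈ range (n + 1), g M j) ∈ eventuallyPolynomial :=
    comp_add_mem (sum_range_mem (hg M)) 1
  have hcorrection : (fun n => ∑ m ∈ range M, (g m - g M) (n - m)) ∈ eventuallyPolynomial := by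
    simpa only [← Finset.sum_fn] using
      sum_mem fun m _ => comp_sub_mem (sub_mem (hg m) (hg M)) m
  refine mem_of_eventuallyEq (add_mem hstable hcorrection) ?_
  filter_upwards [eventually_ge_atTop M] with n hn
  have hvanish : ∀ m ≥ M, (g m - g M) (n - m) = 0 := fun m hm => by simp [hM m hm]
  calc ∑ m ∈ range (n + 1), g m (n - m)
      = ∑ m ∈ range (n + 1), g M (n - m) + ∑ m ∈ range (n + 1), (g m - g M) (n - m) := by
        rw [← sum_add_distrib]; simp
    _ = ∑ j ∈ range (n + 1), g M j + ∑ m ∈ range M, (g m - g M) (n - m) := by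
        rw [eventually_constant_sum hvanish (by omega), ← sum_range_reflect (g M) (n + 1)]
        simp

end eventuallyPolynomial

def consSlice {α : Type*} {k : ℕ} (P : Set (Fin (k + 1) → α)) (m : α) : Set (Fin k → α) :=
  {b | Fin.cons m b ∈ P}

section consSlice
variable {α : Type*} [Preorder α] {k : ℕ} {P : Set (Fin (k + 1) → α)}

theorem isLowerSet_consSlice (hP : IsLowerSet P) (m : α) : IsLowerSet (consSlice P m) :=
  fun _ _ hba ha => hP (Fin.cons_le_cons.2 ⟨le_rfl, hba⟩) ha

theorem antitone_consSlice (hP : IsLowerSet P) : Antitone (consSlice P) :=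
  fun _ _ hmm' _ hb => hP (Fin.cons_le_cons.2 ⟨hmm', le_rfl⟩) hb

end consSlice

noncomputable def countingFunction {k : ℕ} (P : Set (Fin k → ℕ)) (n : ℕ) : ℕ :=
  {a ∈ P | ∑ i, a i = n}.ncard

theorem countingFunction_eq_card {k : ℕ} (P : Set (Fin k → ℕ)) [DecidablePred (· ∈ P)] (n : ℕ) :
    countingFunction P n = #{a ∈ Nat.antidiagonalTuple k n | a ∈ P} := by
  rw [countingFunction, ← Set.ncard_coe_finset]
  congr 1
  ext a
  simp [Nat.mem_antidiagonalTuple, and_comm]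

theorem countingFunction_fin_zero (P : Set (Fin 0 → ℕ)) {n : ℕ} (hn : n ≠ 0) :
    countingFunction P n = 0 := by
  simp [countingFunction, hn.symm]

theorem countingFunction_succ {k : ℕ} (P : Set (Fin (k + 1) → ℕ)) (n : ℕ) :
    countingFunction P n = ∑ m ∈ range (n + 1), countingFunction (consSlice P m) (n - m) := by
  classical
  rw [countingFunction_eq_card, card_eq_sum_card_fiberwise (f := fun a => a 0) (t := range (n + 1))]
  · refine sum_congr rfl fun m hm => ?_
    rw [countingFunction_eq_card]
    refine card_nbij' Fin.tail (Fin.cons (α := fun _ => ℕ) m) ?_ ?_ ?_ ?_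
    · intro a ha
      simp only [mem_coe, mem_filter, Nat.mem_antidiagonalTuple, Fin.sum_univ_succ] at ha ⊢
      obtain ⟨⟨hsum, haP⟩, rfl⟩ := ha
      refine ⟨by simp only [Fin.tail]; omega, ?_⟩
      rwa [consSlice, Set.mem_ofPred_eq, Fin.cons_self_tail]
    · intro b hb
      simp only [mem_coe, mem_filter, Nat.mem_antidiagonalTuple, Fin.sum_univ_succ] at hb ⊢
      simp only [mem_range] at hm
      simp only [Fin.cons_zero, Fin.cons_succ, hb.1]
      exact ⟨⟨by omega, hb.2⟩, trivial⟩
    · intro a ha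
      simp only [mem_coe, mem_filter] at ha
      rw [← ha.2, Fin.cons_self_tail]
    · exact fun b _ => Fin.tail_cons (α := fun _ => ℕ) m b
  · intro a ha
    simp only [coe_filter, Nat.mem_antidiagonalTuple, Set.mem_ofPred_eq] at ha
    simp only [coe_range, Set.mem_Iio, ← ha.1, Fin.sum_univ_succ]
    omega

theorem countingFunction_mem_eventuallyPolynomial :
    ∀ {k : ℕ} {P : Set (Fin k → ℕ)}, IsLowerSet P →
      (fun n => (countingFunction P n : ℚ)) ∈ eventuallyPolynomial
  | 0, P, _ => by
    refine ⟨0, ?_⟩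
    filter_upwards [eventually_ne_atTop 0] with n hn
    simp [countingFunction_fin_zero P hn]
  | k + 1, P, hP => by
    let D : ℕ → LowerSet (Fin k → ℕ) := fun m => ⟨consSlice P m, isLowerSet_consSlice hP m⟩
    obtain ⟨M, hM⟩ := WellFoundedLT.antitone_chain_condition (f := D)
      fun _ _ h => (antitone_consSlice hP h : _)
    have hstable : ∀ m ≥ M, (fun n => (countingFunction (consSlice P m) n : ℚ)) =
        fun n => (countingFunction (consSlice P M) n : ℚ) := fun m hm => by
      rw [show consSlice P m = consSlice P M from congrArg SetLike.coe (hM m hm).symm]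
    simpa only [countingFunction_succ, Nat.cast_sum] using
      eventuallyPolynomial.sum_range_succ_comp_sub_mem
        (fun m => countingFunction_mem_eventuallyPolynomial (isLowerSet_consSlice hP m)) hstable

/-- Stanley.  For a downset `P ⊆ ℕ₀^k` under the componentwise order,
the counting function `f_P(n) = #{a ∈ P : a₁ + ⋯ + a_k = n}` eventually agrees with a
rational polynomial. -/
theorem stmt_16 (k : ℕ) (P : Set (Fin k → ℕ))
    (hdown : ∀ a b : Fin k → ℕ, (∀ i, a i ≤ b i) → b ∈ P → a ∈ P) :
    ∃ (p : Polynomial ℚ) (N : ℕ), ∀ n ≥ N,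
      ({a ∈ P | ∑ i, a i = n}.ncard : ℚ) = p.eval (n : ℚ) := by
  obtain ⟨p, hp⟩ := countingFunction_mem_eventuallyPolynomial fun a b hba ha => hdown b a hba ha
  obtain ⟨N, hN⟩ := eventually_atTop.1 hp
  exact ⟨p, N, hN⟩
end

section
/- Let P ⊂ ℝ^k be a polytope, i.e. the convex hull of a finite set of points, and for n ∈ ℕ let f_P(n) = #(nP ∩ ℤ^k) be the number of integer lattice points in the dilation nP = {nx : x ∈ P}. If P is a lattice polytope (the convex hull of finitely many points of ℤ^k), then there is a polynomial p(x) with rational coefficients such that f_P(n) = p(n) for every n ∈ ℕ. If P is a rational polytope (the convex hull of finitely many points of ℚ^k), then there is a quasipolynomial p such that f_P(n) = p(n) for every n ∈ ℕ. -/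
/-!
Lift `P = conv(v₁, …, vₘ)` to height one, `wᵢ = (1, vᵢ)`: lattice points of `nP` are the lattice
points of height `n` of the cone spanned by the `wᵢ`. Among the representations
`y = ∑ lᵢ wᵢ` with `l ≥ 0`, pick the lexicographically least `l`. Its support `S` is such that
no `μ` in the kernel, nonnegative off `S`, is lexicographically negative; conversely every
representation supported on such an `S` is the least one. With `D` a common denominator of
the vertices, write `lᵢ = rᵢ + D cᵢ` with `rᵢ ∈ (0, D]` on `S` and `cᵢ ∈ ℕ`. The pairs `(S, r)`
are finitely many and `y ↦ ((S, r), c)` is a bijection, so the count is a sum over the pieces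
`(S, r)` of numbers of compositions `c`. For a piece with `h = ∑ rᵢ` and `#S = s` these number
`((n - h) / D + s - 1).choose (s - 1)` when `D ∣ n - h`, and `0` otherwise: on the residue class
of `h` modulo `D` this is a polynomial in `n` for `n ≥ 1`. Hence the count is a polynomial on
each residue class modulo `D`, i.e. a quasipolynomial, and a polynomial when `D = 1`.
-/

open Set Filter Topology Finset Polynomial Pointwise

namespace Ehrhart

variable {m : ℕ}

theorem _root_.IsCompact.exists_forall_toLex_le {K : Set (Fin m → ℝ)} (hK : IsCompact K)
    (hne : K.Nonempty) : ∃ a ∈ K, ∀ b ∈ K, toLex a ≤ toLex b := by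
  induction m with
  | zero =>
    exact ⟨hne.some, hne.some_mem, fun b _ => (congrArg toLex (Subsingleton.elim _ b)).le⟩
  | succ m ih =>
    obtain ⟨a₀, ha₀K, ha₀⟩ := hK.exists_isMinOn hne (continuous_apply 0).continuousOn
    set K₀ := K ∩ {b | b 0 = a₀ 0}
    have hK₀ : IsCompact K₀ := hK.inter_right (isClosed_eq (continuous_apply 0) continuous_const)
    have htail : Continuous (Fin.tail : (Fin (m + 1) → ℝ) → Fin m → ℝ) :=
      continuous_pi fun i => continuous_apply i.succ
    obtain ⟨_, ⟨a, ⟨haK, ha0⟩, rfl⟩, ha⟩ :=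
      ih (hK₀.image htail) ⟨_, Set.mem_image_of_mem _ ⟨ha₀K, rfl⟩⟩
    refine ⟨a, haK, fun b hb => ?_⟩
    rw [← Fin.cons_self_tail a, ← Fin.cons_self_tail b]
    rcases (show a₀ 0 ≤ b 0 from ha₀ hb).lt_or_eq with hlt | heq
    · exact le_of_lt ((Fin.pi_lex_lt_cons_cons _).2 (Or.inl (ha0 ▸ hlt)))
    · rcases (ha _ (Set.mem_image_of_mem _ ⟨hb, heq.symm⟩)).lt_or_eq with hlt | heq'
      · exact le_of_lt ((Fin.pi_lex_lt_cons_cons _).2 (Or.inr ⟨ha0.trans heq, hlt⟩))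
      · rw [ha0.trans heq, toLex_inj.1 heq']

theorem toLex_smul_lt_zero {μ : Fin m → ℝ} (hμ : toLex μ < 0) {c : ℝ} (hc : 0 < c) :
    toLex (c • μ) < 0 := by
  obtain ⟨i, hi, hlt⟩ := hμ
  refine ⟨i, fun j hj => ?_, ?_⟩
  · change c * μ j = 0
    rw [show μ j = 0 from hi j hj, mul_zero]
  · exact mul_neg_of_pos_of_neg hc hlt

section LexMin

variable {E : Type*} [AddCommGroup E] [Module ℝ E]

def nonnegFiber (A : (Fin m → ℝ) →ₗ[ℝ] E) (y : E) : Set (Fin m → ℝ) := {l | 0 ≤ l ∧ A l = y}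

def IsLexMinSupport (A : (Fin m → ℝ) →ₗ[ℝ] E) (S : Finset (Fin m)) : Prop :=
  ∀ μ ∈ LinearMap.ker A, (∀ i ∉ S, 0 ≤ μ i) → 0 ≤ toLex μ

variable {A : (Fin m → ℝ) →ₗ[ℝ] E} {S : Finset (Fin m)} {y : E}

theorem IsLexMinSupport.eq_zero (hS : IsLexMinSupport A S) {μ : Fin m → ℝ}
    (hμ : μ ∈ LinearMap.ker A) (hsupp : ∀ i ∉ S, μ i = 0) : μ = 0 := by
  have h₁ := hS μ hμ fun i hi => (hsupp i hi).ge
  have h₂ := hS (-μ) (neg_mem hμ) fun i hi => by simp [hsupp i hi]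
  exact toLex_inj.1 (le_antisymm (neg_nonneg.1 h₂) h₁)

theorem IsLexMinSupport.toLex_le (hS : IsLexMinSupport A S) {l l' : Fin m → ℝ}
    (hl : l ∈ nonnegFiber A y) (hsupp : ∀ i ∉ S, l i = 0) (hl' : l' ∈ nonnegFiber A y) :
    toLex l ≤ toLex l' := by
  have := hS (l' - l) (by simp [LinearMap.mem_ker, hl.2, hl'.2]) fun i hi => by
    simpa [hsupp i hi] using hl'.1 i
  exact sub_nonneg.1 this

theorem isLexMinSupport_of_forall_toLex_le {l : Fin m → ℝ} (hl : l ∈ nonnegFiber A y)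
    (hmin : ∀ l' ∈ nonnegFiber A y, toLex l ≤ toLex l') :
    IsLexMinSupport A {i | l i ≠ 0} := by
  intro μ hμ hpos
  by_contra! hneg
  -- a small step from `l` along `μ` stays in the fibre and is lexicographically smaller
  have hsmall : ∀ᶠ ε in 𝓝[>] (0 : ℝ), 0 ≤ l + ε • μ := by
    refine Filter.eventually_all.2 fun i => ?_
    rcases (hl.1 i).eq_or_lt with h | h
    · filter_upwards [self_mem_nhdsWithin] with ε hε
      have := hpos i (by simp [← h])
      simp only [Pi.add_apply, Pi.smul_apply, smul_eq_mul, ← h, Pi.zero_apply, zero_add]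
      exact mul_nonneg hε.le this
    · have hcont : Tendsto (fun ε : ℝ => l i + ε * μ i) (𝓝 0) (𝓝 (l i)) := by
        simpa using ((continuous_id.mul continuous_const).const_add (l i)).tendsto (0 : ℝ)
      filter_upwards [nhdsWithin_le_nhds (hcont.eventually (lt_mem_nhds h))] with ε hε
      exact hε.le
  obtain ⟨ε, hl', hε⟩ := (hsmall.and self_mem_nhdsWithin).exists
  have := hmin (l + ε • μ) ⟨hl', by simp [LinearMap.mem_ker.1 hμ, hl.2]⟩
  have hlt : toLex (l + ε • μ) < toLex l := by
    simpa using add_lt_add_left (toLex_smul_lt_zero hneg hε) (toLex l)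
  exact this.not_gt hlt

end LexMin

def latticePoints (ι : Type*) : AddSubgroup (ι → ℝ) :=
  AddSubgroup.pi univ fun _ => (Int.castAddHom ℝ).range

theorem mem_latticePoints {ι : Type*} {y : ι → ℝ} :
    y ∈ latticePoints ι ↔ ∀ i, ∃ z : ℤ, y i = z := by
  simp [latticePoints, AddSubgroup.mem_pi, AddSubgroup.mem_zmultiples_iff, eq_comm]

theorem _root_.IsCompact.finite_inter_latticePoints {ι : Type*} [Finite ι] {K : Set (ι → ℝ)}
    (hK : IsCompact K) : (K ∩ latticePoints ι).Finite := by
  set cast : (ι → ℤ) → ι → ℝ := fun z i => z i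
  have hcast : IsClosedEmbedding cast :=
    IsClosedEmbedding.piMap fun _ => Int.isClosedEmbedding_coe_real
  refine (((hcast.isCompact_preimage hK).finite_of_discrete).image cast).subset ?_
  rintro y ⟨hyK, hy⟩
  choose z hz using mem_latticePoints.1 hy
  have hzy : cast z = y := funext fun i => (hz i).symm
  exact ⟨z, show cast z ∈ K from hzy ▸ hyK, hzy⟩

variable {ι : Type*}

def box (A : (Fin m → ℝ) →ₗ[ℝ] (ι → ℝ)) (D : ℕ) (S : Finset (Fin m)) : Set (Fin m → ℝ) :=
  {r | (∀ i ∈ S, r i ∈ Ioc 0 (D : ℝ)) ∧ (∀ i ∉ S, r i = 0) ∧ A r ∈ latticePoints ι}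

theorem box_subset_Icc (A : (Fin m → ℝ) →ₗ[ℝ] (ι → ℝ)) (D : ℕ) (S : Finset (Fin m)) :
    box A D S ⊆ Icc 0 fun _ => (D : ℝ) := by
  intro r ⟨hS, hSc, _⟩
  refine ⟨fun i => ?_, fun i => ?_⟩ <;> by_cases hi : i ∈ S
  · exact (hS i hi).1.le
  · exact (hSc i hi).ge
  · exact (hS i hi).2
  · simp [hSc i hi]

theorem IsLexMinSupport.finite_box [Fintype ι] {A : (Fin m → ℝ) →ₗ[ℝ] (ι → ℝ)}
    {S : Finset (Fin m)} (hS : IsLexMinSupport A S) (D : ℕ) : (box A D S).Finite := by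
  have hinj : InjOn A (box A D S) := fun r hr r' hr' h =>
    sub_eq_zero.1 (hS.eq_zero (by simp [LinearMap.mem_ker, h]) fun i hi => by
      simp [hr.2.1 i hi, hr'.2.1 i hi])
  refine Finite.of_finite_image ?_ hinj
  have hK : IsCompact (A '' Icc 0 fun _ => (D : ℝ)) :=
    isCompact_Icc.image A.continuous_of_finiteDimensional
  refine hK.finite_inter_latticePoints.subset ?_
  rintro _ ⟨r, hr, rfl⟩
  exact ⟨mem_image_of_mem _ (box_subset_Icc A D S hr), hr.2.2⟩

def pieces (A : (Fin m → ℝ) →ₗ[ℝ] (ι → ℝ)) (D : ℕ) : Set (Finset (Fin m) × (Fin m → ℝ)) :=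
  {p | p.1.Nonempty ∧ IsLexMinSupport A p.1 ∧ p.2 ∈ box A D p.1}

theorem finite_pieces [Fintype ι] (A : (Fin m → ℝ) →ₗ[ℝ] (ι → ℝ)) (D : ℕ) :
    (pieces A D).Finite := by
  refine ((Set.toFinite {S : Finset (Fin m) | IsLexMinSupport A S}).biUnion
    fun S hS => (finite_singleton S).prod (IsLexMinSupport.finite_box hS D)).subset ?_
  rintro ⟨S, r⟩ ⟨-, hS, hr⟩
  exact mem_biUnion hS ⟨rfl, hr⟩

-- On the boxes of a cone `∑ i, r i` is a natural number (`natCast_height`); the floor only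
-- changes its type.
noncomputable def height (r : Fin m → ℝ) : ℕ := ⌊∑ i, r i⌋₊

theorem height_le {D : ℕ} {A : (Fin m → ℝ) →ₗ[ℝ] (ι → ℝ)} {S : Finset (Fin m)}
    {r : Fin m → ℝ} (hr : r ∈ box A D S) : height r ≤ D * #S := by
  refine Nat.floor_le_of_le ?_
  rw [← sum_subset (subset_univ S) fun i _ hi => hr.2.1 i hi, Nat.cast_mul, mul_comm]
  simpa using sum_le_sum fun i hi => (hr.1 i hi).2

def compositions (D : ℕ) (S : Finset (Fin m)) (h n : ℕ) : Set (Fin m → ℕ) :=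
  {c | (∀ i ∉ S, c i = 0) ∧ h + D * ∑ i, c i = n}

theorem card_piAntidiag_nat (S : Finset (Fin m)) (M : ℕ) :
    #(S.piAntidiag M) = (#S + M - 1).choose M := by
  rw [← card_finsuppAntidiag_nat_eq_choose, finsuppAntidiag, card_map, card_attach]

theorem compositions_eq_piAntidiag {D : ℕ} (hD : 0 < D) {S : Finset (Fin m)} {h n M : ℕ}
    (hM : h + D * M = n) : compositions D S h n = ↑(S.piAntidiag M) := by
  ext c
  simp only [compositions, mem_ofPred_eq, mem_coe, mem_piAntidiag, ← hM, add_right_inj,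
    mul_right_inj' hD.ne']
  constructor
  · rintro ⟨hS, hsum⟩
    refine ⟨?_, fun i hi => by_contra fun hiS => hi (hS i hiS)⟩
    rwa [sum_subset (subset_univ S) fun i _ hi => hS i hi]
  · rintro ⟨hsum, hS⟩
    refine ⟨fun i hi => by_contra fun hc => hi (hS i hc), ?_⟩
    rwa [← sum_subset (subset_univ S) fun i _ hi => by_contra fun hc => hi (hS i hc)]

theorem compositions_eq_empty {D : ℕ} {S : Finset (Fin m)} {h n : ℕ}
    (hn : ∀ M, h + D * M ≠ n) : compositions D S h n = ∅ :=
  eq_empty_of_forall_notMem fun _ hc => hn _ hc.2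

theorem finite_compositions {D : ℕ} (hD : 0 < D) {S : Finset (Fin m)} {h n : ℕ} :
    (compositions D S h n).Finite := by
  by_cases hM : ∃ M, h + D * M = n
  · obtain ⟨M, hM⟩ := hM
    rw [compositions_eq_piAntidiag hD hM]
    exact finite_toSet _
  · rw [compositions_eq_empty fun M h => hM ⟨M, h⟩]
    exact finite_empty

/-- `((n - h) / D + s - 1).choose (s - 1)` as a polynomial in `n`; its Pochhammer factor also
vanishes at the `1 ≤ n < h` with `n ≡ h [MOD D]` when `h ≤ D * s`. -/
noncomputable def compositionPoly (D h s : ℕ) : ℚ[X] :=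
  C ((s - 1).factorial : ℚ)⁻¹ * (ascPochhammer ℚ (s - 1)).comp (C (D : ℚ)⁻¹ * (X - C (h : ℚ)) + 1)

theorem eval_compositionPoly (D h s : ℕ) (x : ℚ) :
    (compositionPoly D h s).eval x =
      (ascPochhammer ℚ (s - 1)).eval ((x - h) / D + 1) / (s - 1).factorial := by
  simp [compositionPoly, eval_comp, div_eq_mul_inv, mul_comm]

theorem eval_compositionPoly_add_mul {D : ℕ} (hD : 0 < D) (h s M : ℕ) :
    (compositionPoly D h s).eval ((h + D * M : ℕ) : ℚ) = (M + (s - 1)).choose (s - 1) := by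
  have : (((h + D * M : ℕ) : ℚ) - h) / D + 1 = ((M + 1 : ℕ) : ℚ) := by
    push_cast; field_simp; ring
  rw [eval_compositionPoly, this, ascPochhammer_nat_eq_natCast_ascFactorial,
    Nat.ascFactorial_eq_factorial_mul_choose]
  field_simp
  push_cast; ring

theorem eval_compositionPoly_eq_zero {D h s n : ℕ} (hD : 0 < D) (hhs : h ≤ D * s) (hn : 1 ≤ n)
    (hlt : n < h) (hmod : n % D = h % D) : (compositionPoly D h s).eval (n : ℚ) = 0 := by
  obtain ⟨j, hj⟩ : D ∣ h - n := (Nat.modEq_iff_dvd' hlt.le).1 hmod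
  have hj1 : 1 ≤ j := Nat.pos_of_ne_zero (by rintro rfl; omega)
  have hjs : j - 1 < s - 1 := by
    have : D * j < D * s := by omega
    have := Nat.lt_of_mul_lt_mul_left this
    omega
  have : ((n : ℚ) - h) / D + 1 = -((j - 1 : ℕ) : ℚ) := by
    have hhn : (h : ℚ) - n = D * j := by rw [← Nat.cast_sub hlt.le, hj, Nat.cast_mul]
    rw [Nat.cast_sub hj1, Nat.cast_one]
    field_simp
    linarith
  rw [eval_compositionPoly, this, ascPochhammer_eval_neg_coe_nat_of_lt hjs, zero_div]

theorem natCard_compositions {D h n : ℕ} (hD : 0 < D) {S : Finset (Fin m)} (hS : S.Nonempty)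
    (hhS : h ≤ D * #S) (hn : 1 ≤ n) :
    (Nat.card (compositions D S h n) : ℚ) =
      if h % D = n % D then (compositionPoly D h #S).eval (n : ℚ) else 0 := by
  by_cases hmod : h % D = n % D
  · rw [if_pos hmod]
    rcases le_or_gt h n with hle | hlt
    · obtain ⟨M, hM⟩ := (Nat.modEq_iff_dvd' hle).1 hmod
      have hM' : h + D * M = n := by omega
      rw [compositions_eq_piAntidiag hD hM', Nat.card_coe_set_eq, ncard_coe_finset,
        card_piAntidiag_nat, ← hM', eval_compositionPoly_add_mul hD,
        show #S + M - 1 = M + (#S - 1) by have := hS.card_pos; omega, Nat.choose_symm_add]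
    · rw [compositions_eq_empty fun M hM => by omega,
        eval_compositionPoly_eq_zero hD hhS hn hlt hmod.symm]
      simp
  · rw [if_neg hmod, compositions_eq_empty fun M hM => hmod (by simp [← hM])]
    simp

theorem sub_mul_ceil_div_sub_one_mem_Ioc {D x : ℝ} (hD : 0 < D) (hx : 0 < x) :
    x - D * ((⌈x / D⌉₊ - 1 : ℕ) : ℝ) ∈ Ioc 0 D := by
  have h1 : 1 ≤ ⌈x / D⌉₊ := Nat.one_le_iff_ne_zero.2 (Nat.ceil_pos.2 (div_pos hx hD)).ne'
  have hle := Nat.le_ceil (x / D)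
  have hlt := Nat.ceil_lt_add_one (div_pos hx hD).le
  rw [Nat.cast_sub h1, Nat.cast_one]
  rw [div_le_iff₀ hD] at hle
  rw [← sub_lt_iff_lt_add, lt_div_iff₀ hD] at hlt
  constructor <;> nlinarith

theorem ceil_add_mul_div_sub_one {D r : ℝ} (hr : r ∈ Ioc 0 D) (c : ℕ) :
    ⌈(r + D * c) / D⌉₊ - 1 = c := by
  have hD : 0 < D := hr.1.trans_le hr.2
  have hceil : ⌈r / D⌉₊ = 1 := (Nat.ceil_eq_iff one_ne_zero).2
    ⟨by simpa using div_pos hr.1 hD, by simpa using (div_le_one hD).2 hr.2⟩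
  rw [add_div, mul_div_cancel_left₀ _ hD.ne', Nat.ceil_add_natCast (div_pos hr.1 hD).le, hceil]
  omega

section Cone

variable {k : ℕ} {w : Fin m → Fin (k + 1) → ℝ}

theorem linearCombination_apply_zero (hw0 : ∀ i, w i 0 = 1) (l : Fin m → ℝ) :
    Fintype.linearCombination ℝ w l 0 = ∑ i, l i := by
  simp [Fintype.linearCombination_apply, hw0]

theorem isCompact_nonnegFiber (hw0 : ∀ i, w i 0 = 1) (y : Fin (k + 1) → ℝ) :
    IsCompact (nonnegFiber (Fintype.linearCombination ℝ w) y) := by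
  have hclosed : IsClosed (nonnegFiber (Fintype.linearCombination ℝ w) y) :=
    isClosed_Ici.inter (isClosed_singleton.preimage
      (Fintype.linearCombination ℝ w).continuous_of_finiteDimensional)
  refine (isCompact_Icc (b := fun _ => y 0)).of_isClosed_subset hclosed
    fun l hl => ⟨hl.1, fun i => ?_⟩
  rw [← hl.2, linearCombination_apply_zero hw0]
  exact single_le_sum (fun j _ => hl.1 j) (mem_univ i)

variable (w) in
def conePoints (n : ℕ) : Set (Fin (k + 1) → ℝ) :=
  {y | y ∈ latticePoints _ ∧ y 0 = n ∧ (nonnegFiber (Fintype.linearCombination ℝ w) y).Nonempty}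

theorem natCast_height (hw0 : ∀ i, w i 0 = 1) {D : ℕ} {S : Finset (Fin m)} {r : Fin m → ℝ}
    (hr : r ∈ box (Fintype.linearCombination ℝ w) D S) : (height r : ℝ) = ∑ i, r i := by
  obtain ⟨z, hz⟩ := mem_latticePoints.1 hr.2.2 0
  rw [linearCombination_apply_zero hw0] at hz
  have hnonneg : 0 ≤ ∑ i, r i := sum_nonneg fun i _ => box_subset_Icc _ D S hr |>.1 i
  lift z to ℕ using by exact_mod_cast hz ▸ hnonneg
  rw [height, hz, Int.cast_natCast, Nat.floor_natCast]

def assemble (D : ℕ) (r : Fin m → ℝ) (c : Fin m → ℕ) : Fin m → ℝ := fun i => r i + D * c i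

theorem assemble_eq_zero {D : ℕ} {S : Finset (Fin m)} {r : Fin m → ℝ} {c : Fin m → ℕ}
    (hr : ∀ i ∉ S, r i = 0) (hc : ∀ i ∉ S, c i = 0) {i : Fin m} (hi : i ∉ S) :
    assemble D r c i = 0 := by
  simp [assemble, hr i hi, hc i hi]

theorem assemble_pos {D : ℕ} {S : Finset (Fin m)} {r : Fin m → ℝ} (c : Fin m → ℕ)
    (hr : ∀ i ∈ S, r i ∈ Ioc 0 (D : ℝ)) {i : Fin m} (hi : i ∈ S) : 0 < assemble D r c i := by
  have := (hr i hi).1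
  unfold assemble
  positivity

theorem linearCombination_assemble (D : ℕ) (r : Fin m → ℝ) (c : Fin m → ℕ) :
    Fintype.linearCombination ℝ w (assemble D r c) =
      Fintype.linearCombination ℝ w r + ∑ i, c i • ((D : ℝ) • w i) := by
  simp only [Fintype.linearCombination_apply, assemble, add_smul, sum_add_distrib, mul_smul,
    ← Nat.cast_smul_eq_nsmul ℝ]
  congr 1
  exact sum_congr rfl fun i _ => smul_comm _ _ _

theorem sum_assemble (hw0 : ∀ i, w i 0 = 1) {D : ℕ} {S : Finset (Fin m)} {r : Fin m → ℝ}
    (hr : r ∈ box (Fintype.linearCombination ℝ w) D S) (c : Fin m → ℕ) :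
    ∑ i, assemble D r c i = ((height r + D * ∑ i, c i : ℕ) : ℝ) := by
  simp [assemble, sum_add_distrib, mul_sum, natCast_height hw0 hr]

variable {D : ℕ} {p : Finset (Fin m) × (Fin m → ℝ)} {c : Fin m → ℕ}

theorem assemble_mem_nonnegFiber (hp : p ∈ pieces (Fintype.linearCombination ℝ w) D)
    (hc : ∀ i ∉ p.1, c i = 0) :
    assemble D p.2 c ∈ nonnegFiber (Fintype.linearCombination ℝ w)
      (Fintype.linearCombination ℝ w (assemble D p.2 c)) := by
  refine ⟨fun i => ?_, rfl⟩
  by_cases hi : i ∈ p.1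
  · exact (assemble_pos c hp.2.2.1 hi).le
  · exact (assemble_eq_zero hp.2.2.2.1 hc hi).ge

theorem assemble_mem_conePoints (hw0 : ∀ i, w i 0 = 1)
    (hwD : ∀ i, (D : ℝ) • w i ∈ latticePoints (Fin (k + 1))) {n : ℕ}
    (hp : p ∈ pieces (Fintype.linearCombination ℝ w) D)
    (hc : c ∈ compositions D p.1 (height p.2) n) :
    Fintype.linearCombination ℝ w (assemble D p.2 c) ∈ conePoints w n := by
  refine ⟨?_, ?_, _, assemble_mem_nonnegFiber hp hc.1⟩
  · rw [linearCombination_assemble]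
    exact add_mem hp.2.2.2.2 (sum_mem fun i _ => nsmul_mem (hwD i) _)
  · rw [linearCombination_apply_zero hw0, sum_assemble hw0 hp.2.2, hc.2]

theorem mem_iff_assemble_ne_zero (hp : p ∈ pieces (Fintype.linearCombination ℝ w) D)
    (hc : ∀ i ∉ p.1, c i = 0) (i : Fin m) : i ∈ p.1 ↔ assemble D p.2 c i ≠ 0 :=
  ⟨fun hi => (assemble_pos c hp.2.2.1 hi).ne', not_imp_comm.1 (assemble_eq_zero hp.2.2.2.1 hc)⟩

theorem eq_of_linearCombination_assemble_eq {p' : Finset (Fin m) × (Fin m → ℝ)} {c' : Fin m → ℕ}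
    (hp : p ∈ pieces (Fintype.linearCombination ℝ w) D) (hc : ∀ i ∉ p.1, c i = 0)
    (hp' : p' ∈ pieces (Fintype.linearCombination ℝ w) D) (hc' : ∀ i ∉ p'.1, c' i = 0)
    (h : Fintype.linearCombination ℝ w (assemble D p.2 c) =
      Fintype.linearCombination ℝ w (assemble D p'.2 c')) : p = p' ∧ c = c' := by
  have hl : assemble D p.2 c = assemble D p'.2 c' := by
    have hf := assemble_mem_nonnegFiber hp hc
    have hf' := assemble_mem_nonnegFiber hp' hc'
    refine toLex_inj.1 (le_antisymm ?_ ?_)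
    · exact hp.2.1.toLex_le hf (fun i hi => assemble_eq_zero hp.2.2.2.1 hc hi) (h ▸ hf')
    · exact hp'.2.1.toLex_le hf' (fun i hi => assemble_eq_zero hp'.2.2.2.1 hc' hi) (h ▸ hf)
  have hS : p.1 = p'.1 := Finset.ext fun i => by
    rw [mem_iff_assemble_ne_zero hp hc, mem_iff_assemble_ne_zero hp' hc', hl]
  have hcc : c = c' := funext fun i => by
    by_cases hi : i ∈ p.1
    · rw [← ceil_add_mul_div_sub_one (hp.2.2.1 i hi) (c i),
        ← ceil_add_mul_div_sub_one (hp'.2.2.1 i (hS ▸ hi)) (c' i)]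
      have := congrFun hl i
      simp only [assemble] at this
      rw [this]
    · rw [hc i hi, hc' i (hS ▸ hi)]
  refine ⟨Prod.ext hS (funext fun i => ?_), hcc⟩
  simpa [assemble, hcc] using congrFun hl i

theorem exists_linearCombination_assemble_eq (hD : 0 < D) (hw0 : ∀ i, w i 0 = 1)
    (hwD : ∀ i, (D : ℝ) • w i ∈ latticePoints (Fin (k + 1))) {n : ℕ} (hn : 1 ≤ n)
    {y : Fin (k + 1) → ℝ} (hy : y ∈ conePoints w n) :
    ∃ p ∈ pieces (Fintype.linearCombination ℝ w) D, ∃ c ∈ compositions D p.1 (height p.2) n,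
      Fintype.linearCombination ℝ w (assemble D p.2 c) = y := by
  obtain ⟨hlat, hy0, hne⟩ := hy
  obtain ⟨l, hl, hmin⟩ := (isCompact_nonnegFiber hw0 y).exists_forall_toLex_le hne
  set S : Finset (Fin m) := {i | l i ≠ 0}
  set c : Fin m → ℕ := fun i => ⌈l i / D⌉₊ - 1
  set r : Fin m → ℝ := fun i => l i - D * c i
  have hlr : assemble D r c = l := funext fun i => sub_add_cancel _ _
  have hc : ∀ i ∉ S, c i = 0 := fun i hi => by simp_all [S, c]
  have hr : r ∈ box (Fintype.linearCombination ℝ w) D S := by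
    refine ⟨fun i hi => ?_, fun i hi => by simp_all [S, r], ?_⟩
    · exact sub_mul_ceil_div_sub_one_mem_Ioc (Nat.cast_pos.2 hD)
        ((hl.1 i).lt_of_ne (Ne.symm (mem_filter.1 hi).2))
    · have := linearCombination_assemble (w := w) D r c
      rw [hlr, hl.2] at this
      rw [eq_sub_of_add_eq this.symm]
      exact sub_mem hlat (sum_mem fun i _ => nsmul_mem (hwD i) _)
  have hsum : ((height r + D * ∑ i, c i : ℕ) : ℝ) = n := by
    rw [← sum_assemble hw0 hr, hlr, ← hy0, ← hl.2, linearCombination_apply_zero hw0]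
  have hSne : S.Nonempty := by
    have hl0 : ∑ i, l i ≠ 0 := by
      rw [← linearCombination_apply_zero hw0, hl.2, hy0]
      exact_mod_cast (Nat.one_le_iff_ne_zero.1 hn)
    obtain ⟨i, -, hi⟩ := exists_ne_zero_of_sum_ne_zero hl0
    exact ⟨i, by simpa [S] using hi⟩
  refine ⟨(S, r), ⟨hSne, isLexMinSupport_of_forall_toLex_le hl hmin, hr⟩, c,
    ⟨hc, by exact_mod_cast hsum⟩, by rw [hlr, hl.2]⟩

theorem ncard_conePoints (hD : 0 < D) (hw0 : ∀ i, w i 0 = 1)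
    (hwD : ∀ i, (D : ℝ) • w i ∈ latticePoints (Fin (k + 1))) {n : ℕ} (hn : 1 ≤ n) :
    (conePoints w n).ncard = ∑ p ∈ (finite_pieces (Fintype.linearCombination ℝ w) D).toFinset,
      Nat.card (compositions D p.1 (height p.2) n) := by
  set P := (finite_pieces (Fintype.linearCombination ℝ w) D).toFinset
  let Φ : (Σ p : P, compositions D p.1.1 (height p.1.2) n) → conePoints w n := fun x =>
    ⟨_, assemble_mem_conePoints hw0 hwD ((Finite.mem_toFinset _).1 x.1.2) x.2.2⟩
  have hΦ : Function.Bijective Φ := by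
    refine ⟨fun x x' h => ?_, fun y => ?_⟩
    · obtain ⟨hp, hc⟩ := eq_of_linearCombination_assemble_eq ((Finite.mem_toFinset _).1 x.1.2)
        x.2.2.1 ((Finite.mem_toFinset _).1 x'.1.2) x'.2.2.1 (congrArg Subtype.val h)
      exact Sigma.subtype_ext (Subtype.ext hp) hc
    · obtain ⟨p, hp, c, hc, hy⟩ := exists_linearCombination_assemble_eq hD hw0 hwD hn y.2
      exact ⟨⟨⟨p, (Finite.mem_toFinset _).2 hp⟩, c, hc⟩, Subtype.ext hy⟩
  have : ∀ p : P, Finite (compositions D p.1.1 (height p.1.2) n) := fun _ =>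
    (finite_compositions hD).to_subtype
  rw [← Nat.card_coe_set_eq, ← Nat.card_congr (Equiv.ofBijective Φ hΦ), Nat.card_sigma,
    ← sum_coe_sort P]

theorem exists_eval_eq_ncard_conePoints (hD : 0 < D) (hw0 : ∀ i, w i 0 = 1)
    (hwD : ∀ i, (D : ℝ) • w i ∈ latticePoints (Fin (k + 1))) :
    ∃ q : ℕ → ℚ[X], ∀ n, 1 ≤ n → ((conePoints w n).ncard : ℚ) = (q (n % D)).eval (n : ℚ) := by
  set P := (finite_pieces (Fintype.linearCombination ℝ w) D).toFinset
  refine ⟨fun ρ => ∑ p ∈ P with height p.2 % D = ρ, compositionPoly D (height p.2) #p.1,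
    fun n hn => ?_⟩
  rw [ncard_conePoints hD hw0 hwD hn, Nat.cast_sum, eval_finsetSum, sum_filter]
  refine sum_congr rfl fun p hp => ?_
  have hp := (Finite.mem_toFinset _).1 hp
  exact natCard_compositions hD hp.1 (height_le hp.2.2) hn

end Cone

theorem linearCombination_cons {k : ℕ} (v : Fin m → Fin k → ℝ) (l : Fin m → ℝ) :
    Fintype.linearCombination ℝ (fun i => (Fin.cons 1 (v i) : Fin (k + 1) → ℝ)) l =
      Fin.cons (∑ i, l i) (Fintype.linearCombination ℝ v l) := by
  ext j
  cases j using Fin.cases <;> simp [Fintype.linearCombination_apply, Finset.sum_apply]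

section ConvexHull

variable {E : Type*} [AddCommGroup E] [Module ℝ E]

theorem convexHull_range_eq_image_stdSimplex (v : Fin m → E) :
    convexHull ℝ (range v) = Fintype.linearCombination ℝ v '' stdSimplex ℝ (Fin m) := by
  rw [← convexHull_rangle_single_eq_stdSimplex, LinearMap.image_convexHull, ← range_comp]
  congr
  funext i
  simp [Fintype.linearCombination_apply_single]

theorem mem_smul_convexHull_range_iff {n : ℝ} (hn : 0 < n) (v : Fin m → E) {x : E} :
    x ∈ n • convexHull ℝ (range v) ↔
      ∃ l : Fin m → ℝ, 0 ≤ l ∧ ∑ i, l i = n ∧ Fintype.linearCombination ℝ v l = x := by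
  rw [convexHull_range_eq_image_stdSimplex, mem_smul_set]
  constructor
  · rintro ⟨_, ⟨t, ⟨ht0, ht1⟩, rfl⟩, rfl⟩
    refine ⟨n • t, fun i => ?_, ?_, by simp⟩
    · simpa using mul_nonneg hn.le (ht0 i)
    · simp [← mul_sum, ht1]
  · rintro ⟨l, hl0, hl1, rfl⟩
    refine ⟨_, ⟨n⁻¹ • l, ⟨fun i => ?_, ?_⟩, rfl⟩, by simp [smul_smul, hn.ne']⟩
    · simpa using mul_nonneg (inv_nonneg.2 hn.le) (hl0 i)
    · simp [← mul_sum, hl1, hn.ne']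

end ConvexHull

theorem ncard_latticePoints_smul_convexHull {k : ℕ} (v : Fin m → Fin k → ℝ) {n : ℕ}
    (hn : 1 ≤ n) :
    {x : Fin k → ℝ | x ∈ (n : ℝ) • convexHull ℝ (range v) ∧ ∀ i, ∃ z : ℤ, x i = z}.ncard =
      (conePoints (fun i => Fin.cons 1 (v i)) n).ncard := by
  have hpre : {x : Fin k → ℝ | x ∈ (n : ℝ) • convexHull ℝ (range v) ∧ ∀ i, ∃ z : ℤ, x i = z} =
      Fin.cons (n : ℝ) ⁻¹' conePoints (fun i => Fin.cons 1 (v i)) n := by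
    ext x
    have hnZ : ∃ z : ℤ, (n : ℝ) = z := ⟨n, by simp⟩
    simp only [Set.mem_preimage, conePoints, mem_ofPred_eq, mem_latticePoints,
      Fin.forall_fin_succ, Fin.cons_zero, Fin.cons_succ, hnZ, true_and,
      mem_smul_convexHull_range_iff (Nat.cast_pos.2 hn), nonnegFiber, Set.Nonempty,
      linearCombination_cons, Fin.cons_inj]
    exact and_comm
  rw [hpre, ncard_preimage_of_injective_subset_range (Fin.cons_right_injective _)]
  rintro y ⟨-, hy0, -⟩
  exact ⟨Fin.tail y, by rw [← hy0, Fin.cons_self_tail]⟩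

theorem exists_eval_eq_ncard_smul_convexHull {k D : ℕ} (hD : 0 < D) (v : Fin m → Fin k → ℝ)
    (hv : ∀ i j, ∃ z : ℤ, (D : ℝ) * v i j = z) :
    ∃ q : ℕ → ℚ[X], ∀ n : ℕ, 1 ≤ n →
      ({x : Fin k → ℝ | x ∈ (n : ℝ) • convexHull ℝ (range v) ∧ ∀ i, ∃ z : ℤ, x i = z}.ncard
        : ℚ) = (q (n % D)).eval (n : ℚ) := by
  have hwD : ∀ i, (D : ℝ) • (Fin.cons 1 (v i) : Fin (k + 1) → ℝ) ∈ latticePoints (Fin (k + 1)) :=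
    fun i => mem_latticePoints.2 <| Fin.forall_fin_succ.2 ⟨⟨D, by simp⟩, by simpa using hv i⟩
  obtain ⟨q, hq⟩ := exists_eval_eq_ncard_conePoints hD (fun i => Fin.cons_zero _ _) hwD
  exact ⟨q, fun n hn => by rw [ncard_latticePoints_smul_convexHull v hn, hq n hn]⟩

theorem exists_pos_nat_mul_eq_intCast {α : Type*} [Fintype α] {x : α → ℝ}
    (hx : ∀ a, ∃ q : ℚ, x a = q) : ∃ D : ℕ, 0 < D ∧ ∀ a, ∃ z : ℤ, (D : ℝ) * x a = z := by
  choose q hq using hx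
  refine ⟨∏ a, (q a).den, prod_pos fun a _ => (q a).den_pos, fun a => ?_⟩
  obtain ⟨e, he⟩ := dvd_prod_of_mem (fun a => (q a).den) (mem_univ a)
  have hnum : ((q a).den : ℝ) * q a = (q a).num := by exact_mod_cast Rat.den_mul_eq_num (q a)
  refine ⟨e * (q a).num, ?_⟩
  rw [hq a, he]
  push_cast
  linear_combination (e : ℝ) * hnum

theorem exists_quasipolynomial_of_eval_mod {D : ℕ} (hD : 0 < D) (q : ℕ → ℚ[X]) :
    ∃ (d : ℕ) (a : Fin (d + 1) → ℕ → ℚ),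
      (∀ i, ∃ T : ℕ, 1 ≤ T ∧ ∀ n : ℕ, a i (n + T) = a i n) ∧
      ∀ n : ℕ, (q (n % D)).eval (n : ℚ) = ∑ i : Fin (d + 1), a i n * (n : ℚ) ^ (i : ℕ) := by
  refine ⟨(range D).sup fun ρ => (q ρ).natDegree, fun i n => (q (n % D)).coeff i,
    fun i => ⟨D, hD, fun n => by simp only [Nat.add_mod_right]⟩, fun n => ?_⟩
  have hdeg : (q (n % D)).natDegree < (range D).sup (fun ρ => (q ρ).natDegree) + 1 :=
    Nat.lt_succ_of_le (le_sup (f := fun ρ => (q ρ).natDegree) (mem_range.2 (Nat.mod_lt n hD)))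
  rw [eval_eq_sum_range' hdeg, ← Fin.sum_univ_eq_sum_range]

end Ehrhart

open Ehrhart

/-- Ehrhart–Macdonald.  For a lattice polytope `P ⊆ ℝ^k` the lattice
point counting function `f_P(n) = #(nP ∩ ℤ^k)` is a rational polynomial in `n`;
for a rational polytope it is a quasipolynomial in `n`. -/
theorem stmt_17 (k : ℕ) (P : Set (Fin k → ℝ)) (f : ℕ → ℕ)
    (hf : ∀ n : ℕ, f n =
      {x : Fin k → ℝ | x ∈ (n : ℝ) • P ∧ ∀ i, ∃ z : ℤ, x i = (z : ℝ)}.ncard) :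
    ((∃ V : Finset (Fin k → ℝ), (∀ x ∈ V, ∀ i, ∃ z : ℤ, x i = (z : ℝ)) ∧
        P = convexHull ℝ ↑V) →
      ∃ p : Polynomial ℚ, ∀ n : ℕ, 1 ≤ n → (f n : ℚ) = p.eval (n : ℚ)) ∧
    ((∃ V : Finset (Fin k → ℝ), (∀ x ∈ V, ∀ i, ∃ q : ℚ, x i = (q : ℝ)) ∧
        P = convexHull ℝ ↑V) →
      ∃ (d : ℕ) (a : Fin (d + 1) → ℕ → ℚ),
        (∀ i, ∃ T : ℕ, 1 ≤ T ∧ ∀ n : ℕ, a i (n + T) = a i n) ∧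
        ∀ n : ℕ, 1 ≤ n → (f n : ℚ) = ∑ i : Fin (d + 1), a i n * (n : ℚ) ^ (i : ℕ)) := by
  constructor
  · rintro ⟨V, hV, rfl⟩
    obtain ⟨m, v, -, hv⟩ := V.finite_toSet.fin_param
    have hvV : ∀ i, v i ∈ V := fun i => mem_coe.1 (hv.subset (mem_range_self i))
    obtain ⟨q, hq⟩ := exists_eval_eq_ncard_smul_convexHull one_pos v fun i j => by
      simpa using hV _ (hvV i) j
    exact ⟨q 0, fun n hn => by rw [hf, ← hv, hq n hn, Nat.mod_one]⟩
  · rintro ⟨V, hV, rfl⟩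
    obtain ⟨m, v, -, hv⟩ := V.finite_toSet.fin_param
    have hvV : ∀ i, v i ∈ V := fun i => mem_coe.1 (hv.subset (mem_range_self i))
    obtain ⟨D, hD, hDv⟩ := exists_pos_nat_mul_eq_intCast
      (x := fun ij : Fin m × Fin k => v ij.1 ij.2) fun ij => hV _ (hvV ij.1) ij.2
    obtain ⟨q, hq⟩ := exists_eval_eq_ncard_smul_convexHull hD v fun i j => hDv (i, j)
    obtain ⟨d, a, ha, hqa⟩ := exists_quasipolynomial_of_eval_mod hD q
    exact ⟨d, a, ha, fun n hn => by rw [hf, ← hv, hq n hn, hqa]⟩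
end
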